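/- arXiv:2312.11848 — 8 statements merged into one kernel-verified Lean document; each statement's English description precedes it below -/
import Mathlib

section
/- Let G be an f-equitable graph with quotient matrix Q and valency k, where the range of f is {x_0, x_1, ..., x_r}. Set h_{x_0} = 0 and define (h_{x_1}, ..., h_{x_r}) = −𝟙 ((1/k) Q⁻ − I)^{−1}, where Q⁻ is obtained from Q by deleting the x_0-th row and column. Then for all vertices u, v of G, the average hitting time H(G; (v, u)) of a simple random walk from u to v equals h_{f(v,u)}. -/
/-!
Both `H v` and `u ↦ h (f v u)` satisfy the first-step equations of the hitting time of `v`: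
the latter because, by equitability, the neighbours of `u ≠ v` are spread over the cells of
`P_v` according to the column of `Q` indexed by `f v u`, so at `u` the equations become the
linear system defining `h`. The difference of two solutions is harmonic away from `v` and
vanishes at `v`, so by the maximum principle on the connected graph it vanishes everywhere.
-/

open Matrix Finset

namespace SimpleGraph

variable {V : Type*} [Fintype V] (G : SimpleGraph V) [DecidableRel G.Adj]

def IsHarmonicAt (g : V → ℝ) (u : V) : Prop :=
  g u = (∑ w ∈ G.neighborFinset u, g w) / G.degree u

def IsHittingTimeTo (v : V) (H : V → ℝ) : Prop :=
  H v = 0 ∧ ∀ u, u ≠ v → H u = 1 + (∑ w ∈ G.neighborFinset u, H w) / G.degree u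

variable {G}

theorem IsHarmonicAt.apply_eq_of_adj {g : V → ℝ} {u w : V} (hg : G.IsHarmonicAt g u)
    (hmax : ∀ x, g x ≤ g u) (hadj : G.Adj u w) : g w = g u := by
  have hdeg : (G.degree u : ℝ) ≠ 0 := by
    exact_mod_cast ((G.degree_pos_iff_exists_adj u).2 ⟨w, hadj⟩).ne'
  have hsum : ∑ x ∈ G.neighborFinset u, g x = ∑ x ∈ G.neighborFinset u, g u := by
    rw [sum_const, card_neighborFinset_eq_degree, nsmul_eq_mul]
    rw [IsHarmonicAt, eq_div_iff hdeg] at hg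
    linarith
  exact (sum_eq_sum_iff_of_le fun x _ => hmax x).1 hsum w ((G.mem_neighborFinset u w).2 hadj)

theorem Connected.apply_le_of_isHarmonicAt (hconn : G.Connected) {g : V → ℝ} {v : V}
    (hg : ∀ u, u ≠ v → G.IsHarmonicAt g u) (u : V) : g u ≤ g v := by
  obtain ⟨u₀, -, hmax⟩ := exists_max_image univ g ⟨v, mem_univ v⟩
  replace hmax : ∀ x, g x ≤ g u₀ := fun x => hmax x (mem_univ x)
  -- the maximum propagates along a walk from `u₀` to `v`
  suffices ∀ a w (p : G.Walk a w), w = v → g a = g u₀ → g w = g u₀ from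
    (hmax u).trans (this u₀ v (hconn.preconnected u₀ v).some rfl rfl).ge
  intro a w p hw ha
  subst hw
  induction p with
  | nil => exact ha
  | @cons a b w hab p ih =>
    by_cases haw : a = w
    · exact haw ▸ ha
    · exact ih (((hg a haw).apply_eq_of_adj (ha ▸ hmax) hab).trans ha) hg

theorem IsHittingTimeTo.isHarmonicAt_sub {v : V} {H₁ H₂ : V → ℝ} (h₁ : G.IsHittingTimeTo v H₁)
    (h₂ : G.IsHittingTimeTo v H₂) {u : V} (hu : u ≠ v) : G.IsHarmonicAt (H₁ - H₂) u := by
  simp only [IsHarmonicAt, Pi.sub_apply, sum_sub_distrib, h₁.2 u hu, h₂.2 u hu]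
  ring

theorem Connected.isHittingTimeTo_unique (hconn : G.Connected) {v : V} {H₁ H₂ : V → ℝ}
    (h₁ : G.IsHittingTimeTo v H₁) (h₂ : G.IsHittingTimeTo v H₂) : H₁ = H₂ := by
  have hle : ∀ {H₁ H₂ : V → ℝ}, G.IsHittingTimeTo v H₁ → G.IsHittingTimeTo v H₂ → H₁ ≤ H₂ :=
    fun h₁ h₂ u => by
      have := hconn.apply_le_of_isHarmonicAt (fun _ hu => h₁.isHarmonicAt_sub h₂ hu) u
      simp only [Pi.sub_apply, h₁.1, h₂.1] at this
      linarith
  exact le_antisymm (hle h₁ h₂) (hle h₂ h₁)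

end SimpleGraph

theorem Finset.sum_comp_eq_sum_mul_card_filter {ι κ R : Type*} [Fintype κ] [DecidableEq κ]
    [NonAssocSemiring R] (s : Finset ι) (c : ι → κ) (φ : κ → R) :
    ∑ x ∈ s, φ (c x) = ∑ i, φ i * #{x ∈ s | c x = i} := by
  rw [← sum_fiberwise' s c φ]
  simp only [sum_const, nsmul_eq_mul']

theorem Matrix.apply_succ_eq_of_vecMul_sub_one_eq {R : Type*} [CommRing R] {r : ℕ}
    {h : Fin (r + 1) → R} (h0 : h 0 = 0) (c : R) (A : Matrix (Fin (r + 1)) (Fin (r + 1)) R)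
    (hh : (fun i => h i.succ) ᵥ* (c • A.submatrix Fin.succ Fin.succ - 1) = fun _ => -1)
    (j : Fin r) : h j.succ = 1 + c * (h ᵥ* A) j.succ := by
  have hj := congrFun hh j
  have htail : ((fun i => h i.succ) ᵥ* A.submatrix Fin.succ Fin.succ) j = (h ᵥ* A) j.succ := by
    simp [vecMul, dotProduct, Fin.sum_univ_succ, h0]
  rw [vecMul_sub, vecMul_smul, vecMul_one, Pi.sub_apply, Pi.smul_apply, htail, smul_eq_mul] at hj
  linear_combination -hj

theorem hitting_time_f_equitable_general {V : Type*} [Fintype V] {r : ℕ}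
    (G : SimpleGraph V) [DecidableRel G.Adj] (hconn : G.Connected)
    (f : V → V → Fin (r + 1))
    (hf0 : ∀ o v : V, f o v = 0 ↔ v = o)
    (Q : Fin (r + 1) → Fin (r + 1) → ℕ)
    (hQ : ∀ (o v : V) (i : Fin (r + 1)),
      ((G.neighborFinset v).filter (fun u => f o u = i)).card = Q i (f o v))
    (k : ℕ) (hreg : ∀ v : V, G.degree v = k)
    (h : Fin (r + 1) → ℝ) (hh0 : h 0 = 0)
    (hh : Matrix.vecMul (fun i : Fin r => h i.succ)
        (((k : ℝ)⁻¹ • Matrix.of fun i j : Fin r => (Q i.succ j.succ : ℝ)) - 1) =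
      fun _ : Fin r => (-1 : ℝ))
    (H : V → V → ℝ) (hH0 : ∀ v : V, H v v = 0)
    (hHrec : ∀ v u : V, u ≠ v →
      H v u = 1 + (∑ w ∈ G.neighborFinset u, H v w) / (G.degree u : ℝ)) :
    ∀ u v : V, H v u = h (f v u) := by
  intro u v
  have hequitable : G.IsHittingTimeTo v fun u => h (f v u) := by
    refine ⟨by simp only [(hf0 v v).2 rfl, hh0], fun u hu => ?_⟩
    obtain ⟨j, hj⟩ := Fin.exists_succ_eq.2 (mt (hf0 v u).1 hu)
    beta_reduce
    rw [← hj, apply_succ_eq_of_vecMul_sub_one_eq hh0 _ (of fun i j => (Q i j : ℝ)) hh j,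
      sum_comp_eq_sum_mul_card_filter, hreg]
    simp [vecMul, dotProduct, hQ v u, hj, div_eq_inv_mul]
  exact congrFun (hconn.isHittingTimeTo_unique ⟨hH0 v, hHrec v⟩ hequitable) u

/-- Let `G` be an `f`-equitable graph (level sets of `f o := f o ·`
indexed by `Fin (r+1)`, `f o v = 0 ↔ v = o`, quotient matrix `Q` independent of `o`,
all values attained) with valency `k`.  Set `h 0 = 0` and define `(h 1, ..., h r)`
as `−𝟙 ((1/k) Q⁻ − I)⁻¹`, i.e. as the (unique, since `(1/k) Q⁻ − I` is invertible)
solution of `(h 1,...,h r) ((1/k) Q⁻ − I) = −𝟙`, where `Q⁻` deletes row and column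
`0`.  If `H v u` denotes the average hitting time from `u` to `v` (characterized by
`H v v = 0` and the one-step recurrence), then `H v u = h (f v u)` for all `u, v`. -/
theorem hitting_time_f_equitable {V : Type*} [Fintype V] [DecidableEq V] {r : ℕ}
    (G : SimpleGraph V) [DecidableRel G.Adj] (hconn : G.Connected)
    (f : V → V → Fin (r + 1))
    (hf0 : ∀ o v : V, f o v = 0 ↔ v = o)
    (hfsurj : ∀ (o : V) (i : Fin (r + 1)), ∃ v : V, f o v = i)
    (Q : Fin (r + 1) → Fin (r + 1) → ℕ)
    (hQ : ∀ (o v : V) (i : Fin (r + 1)),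
      ((G.neighborFinset v).filter (fun u => f o u = i)).card = Q i (f o v))
    (k : ℕ) (hreg : ∀ v : V, G.degree v = k)
    (h : Fin (r + 1) → ℝ) (hh0 : h 0 = 0)
    (hinv : IsUnit (((k : ℝ)⁻¹ • Matrix.of fun i j : Fin r => (Q i.succ j.succ : ℝ)) - 1))
    (hh : Matrix.vecMul (fun i : Fin r => h i.succ)
        (((k : ℝ)⁻¹ • Matrix.of fun i j : Fin r => (Q i.succ j.succ : ℝ)) - 1) =
      fun _ : Fin r => (-1 : ℝ))
    (H : V → V → ℝ) (hH0 : ∀ v : V, H v v = 0)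
    (hHrec : ∀ v u : V, u ≠ v →
      H v u = 1 + (∑ w ∈ G.neighborFinset u, H v w) / (G.degree u : ℝ)) :
    ∀ u v : V, H v u = h (f v u) :=
  hitting_time_f_equitable_general G hconn f hf0 Q hQ k hreg h hh0 hh H hH0 hHrec
end

section
/- If G is an f-equitable graph with quotient matrix Q (of size (r+1)×(r+1)) and G' is an f'-equitable graph with quotient matrix Q' (of size (r'+1)×(r'+1)), then the Cartesian product G □ G' is (f,f')-equitable with quotient matrix Q ⊗ I_{r'+1} + I_{r+1} ⊗ Q', where (f,f')((u,u'),(v,v')) = (f(u,v), f'(u',v')). -/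
open Kronecker

/-- `G` is `f`-equitable with distinguished value `x0` and quotient matrix `Q`:
for every vertex `o` the level sets of `f o ·` form an equitable partition with
singleton cell `{o}` at `x0` and with quotient matrix `Q` independent of `o`. -/
def IsFEquitable {V ι : Type*} [DecidableEq ι]
    (G : SimpleGraph V) [∀ v, Fintype (G.neighborSet v)]
    (f : V → V → ι) (x0 : ι) (Q : ι → ι → ℕ) : Prop :=
  (∀ o v : V, f o v = x0 ↔ v = o) ∧
    ∀ (o v : V) (i : ι),
      ((G.neighborFinset v).filter (fun u => f o u = i)).card = Q i (f o v)

/-! The neighbours of `(v, v')` in `G □ G'` are the `(u, v')` with `u ~ v` and the `(v, u')` with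
`u' ~ v'`, so counting those whose `(f, f')`-value is `(i, i')` gives
`#{u ~ v | f o u = i} * [f' o' v' = i'] + [f o v = i] * #{u' ~ v' | f' o' u' = i'}`,
the `((i, i'), (f o v, f' o' v'))` entry of `Q ⊗ I + I ⊗ Q'`. -/

theorem SimpleGraph.card_filter_neighborFinset_boxProd {V V' : Type*}
    {G : SimpleGraph V} {G' : SimpleGraph V'}
    [∀ v, Fintype (G.neighborSet v)] [∀ v, Fintype (G'.neighborSet v)]
    [∀ v, Fintype ((G □ G').neighborSet v)] (p : V → Prop) (p' : V' → Prop)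
    [DecidablePred p] [DecidablePred p'] (x : V × V') :
    (((G □ G').neighborFinset x).filter (fun u => p u.1 ∧ p' u.2)).card =
      ((G.neighborFinset x.1).filter p).card * (if p' x.2 then 1 else 0) +
        (if p x.1 then 1 else 0) * ((G'.neighborFinset x.2).filter p').card := by
  rw [neighborFinset_boxProd, Finset.filter_disjUnion, Finset.card_disjUnion,
    Finset.filter_product, Finset.filter_product, Finset.card_product, Finset.card_product,
    Finset.filter_singleton, Finset.filter_singleton]
  split_ifs <;> simp

theorem IsFEquitable.boxProd {V V' ι ι' : Type*} [DecidableEq ι] [DecidableEq ι']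
    {G : SimpleGraph V} {G' : SimpleGraph V'}
    [∀ v, Fintype (G.neighborSet v)] [∀ v, Fintype (G'.neighborSet v)]
    [∀ v, Fintype ((G □ G').neighborSet v)]
    {f : V → V → ι} {f' : V' → V' → ι'} {x0 : ι} {x0' : ι'}
    {Q : Matrix ι ι ℕ} {Q' : Matrix ι' ι' ℕ}
    (hG : IsFEquitable G f x0 Q) (hG' : IsFEquitable G' f' x0' Q') :
    IsFEquitable (G □ G') (fun o p => (f o.1 p.1, f' o.2 p.2)) (x0, x0')
      (Q ⊗ₖ (1 : Matrix ι' ι' ℕ) + (1 : Matrix ι ι ℕ) ⊗ₖ Q') := by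
  refine ⟨fun o v => by simp [Prod.ext_iff, hG.1, hG'.1], fun o v ⟨i, i'⟩ => ?_⟩
  simp only [Prod.mk.injEq]
  rw [SimpleGraph.card_filter_neighborFinset_boxProd (f o.1 · = i) (f' o.2 · = i'), hG.2, hG'.2]
  simp [Matrix.one_apply, eq_comm]

theorem boxProd_isFEquitable_general {V V' : Type*} [Fintype V] [Fintype V']
    {r r' : ℕ}
    (G : SimpleGraph V) (G' : SimpleGraph V')
    [DecidableRel G.Adj] [DecidableRel G'.Adj]
    (f : V → V → Fin (r + 1)) (f' : V' → V' → Fin (r' + 1))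
    (Q : Matrix (Fin (r + 1)) (Fin (r + 1)) ℕ)
    (Q' : Matrix (Fin (r' + 1)) (Fin (r' + 1)) ℕ)
    (hG : IsFEquitable G f 0 Q) (hG' : IsFEquitable G' f' 0 Q') :
    IsFEquitable (G □ G') (fun o p => (f o.1 p.1, f' o.2 p.2)) (0, 0)
      (fun i j =>
        (Q ⊗ₖ (1 : Matrix (Fin (r' + 1)) (Fin (r' + 1)) ℕ) +
          (1 : Matrix (Fin (r + 1)) (Fin (r + 1)) ℕ) ⊗ₖ Q') i j) :=
  hG.boxProd hG'

/-- If `G` is `f`-equitable with quotient matrix `Q` and `G'` is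
`f'`-equitable with quotient matrix `Q'`, then `G □ G'` is `(f,f')`-equitable with
quotient matrix the Kronecker sum `Q ⊗ I + I ⊗ Q'`. -/
theorem boxProd_isFEquitable {V V' : Type*} [Fintype V] [Fintype V']
    [DecidableEq V] [DecidableEq V'] {r r' : ℕ}
    (G : SimpleGraph V) (G' : SimpleGraph V')
    [DecidableRel G.Adj] [DecidableRel G'.Adj]
    (f : V → V → Fin (r + 1)) (f' : V' → V' → Fin (r' + 1))
    (Q : Matrix (Fin (r + 1)) (Fin (r + 1)) ℕ)
    (Q' : Matrix (Fin (r' + 1)) (Fin (r' + 1)) ℕ)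
    (hG : IsFEquitable G f 0 Q) (hG' : IsFEquitable G' f' 0 Q') :
    IsFEquitable (G □ G') (fun o p => (f o.1 p.1, f' o.2 p.2)) (0, 0)
      (fun i j =>
        (Q ⊗ₖ (1 : Matrix (Fin (r' + 1)) (Fin (r' + 1)) ℕ) +
          (1 : Matrix (Fin (r + 1)) (Fin (r + 1)) ℕ) ⊗ₖ Q') i j) :=
  boxProd_isFEquitable_general G G' f f' Q Q' hG hG'
end

section
/- Let q be a prime power with q ≡ 1 (mod 2k) and α a generator of F_q*. Define f_{α,k} : F_q × F_q → {0,1,...,k} by f_{α,k}(u,v) = i if v − u ∈ α^{i−1}(F_q*)^k and f_{α,k}(u,v) = 0 if v = u. Then the generalized Paley graph GP(q,k) is an f_{α,k}-equitable graph: for every n ∈ F_q, the partition P_n = {{n}, n + (F_q*)^k, n + α(F_q*)^k, ..., n + α^{k−1}(F_q*)^k} is an equitable partition of GP(q,k), and its quotient matrix does not depend on n. -/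
open scoped Classical
open Fin.NatCast

/-!
Both the graph and the level sets of `f n ·` are governed by the class of the difference in
`F / (Fˣ)^k`: `u ~ v` iff `u - v ∈ (Fˣ)^k`, and `f n v = j + 1` iff `v - n ∈ α^j (Fˣ)^k`.
Hence two pairs `(n, v)`, `(n', v')` with `f n v = f n' v'` satisfy `v' - n' = (v - n) s^k`
for a unit `s`, and the affine map `x ↦ (x - n) s^k + n'` is an automorphism of `GP(q, k)`
sending `v` to `v'` and the level sets of `f n ·` onto those of `f n' ·`. So the number of
neighbours of `v` in each level set depends only on `f n v`.
-/

open Finset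

namespace SimpleGraph

variable {V W β : Type*}

def fromRelIso {r : V → V → Prop} {r' : W → W → Prop} (φ : V ≃ W)
    (h : ∀ a b, r' (φ a) (φ b) ↔ r a b) : fromRel r ≃g fromRel r' where
  toEquiv := φ
  map_rel_iff' := by simp [fromRel_adj, φ.injective.ne_iff, h]

theorem card_filter_neighborFinset_iso [Fintype V] [Fintype W] {G : SimpleGraph V}
    {G' : SimpleGraph W} [DecidableRel G.Adj] [DecidableRel G'.Adj] [DecidableEq β]
    (φ : G ≃g G') {g : V → β} {g' : W → β} (hg : ∀ x, g' (φ x) = g x) (v : V) (i : β) :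
    #{u ∈ G.neighborFinset v | g u = i} = #{u ∈ G'.neighborFinset (φ v) | g' u = i} := by
  refine card_nbij' φ φ.symm ?_ ?_ (fun x _ => φ.symm_apply_apply x)
    (fun x _ => φ.apply_symm_apply x)
  · intro x
    simp [hg, φ.map_adj_iff]
  · intro x
    simp [← hg, ← φ.map_adj_iff (w := φ.symm x)]

end SimpleGraph

theorem exists_units_pow_eq_mul_pow_iff {M : Type*} [CommMonoid M] (k : ℕ) (x : M) (c : Mˣ) :
    (∃ y : Mˣ, (y : M) ^ k = x * (c : M) ^ k) ↔ ∃ y : Mˣ, (y : M) ^ k = x := by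
  constructor
  · rintro ⟨y, hy⟩
    refine ⟨y * c⁻¹, ?_⟩
    rw [Units.val_mul, mul_pow, hy, ← Units.val_pow_eq_pow_val, ← Units.val_pow_eq_pow_val,
      inv_pow, Units.mul_inv_cancel_right]
  · rintro ⟨y, rfl⟩
    exact ⟨y * c, by simp [mul_pow]⟩

theorem exists_eq_pow_mul_pow_of_forall_mem_zpowers {G : Type*} [Group G] [Finite G] {α : G}
    (hα : ∀ x : G, x ∈ Subgroup.zpowers α) {k : ℕ} (hk : 0 < k) (x : G) :
    ∃ j < k, ∃ y : G, x = α ^ j * y ^ k := by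
  obtain ⟨e, rfl⟩ := mem_powers_iff_mem_zpowers.mpr (hα x)
  exact ⟨e % k, Nat.mod_lt e hk, α ^ (e / k), by rw [← pow_mul, ← pow_add, Nat.mod_add_div']⟩

theorem exists_sub_eq_pow_mul_pow {F : Type*} [Field F] [Fintype F] {α : Fˣ}
    (hα : ∀ x : Fˣ, x ∈ Subgroup.zpowers α) {k : ℕ} (hk : 0 < k) {u v : F} (h : v ≠ u) :
    ∃ j < k, ∃ y : Fˣ, v - u = (α : F) ^ j * (y : F) ^ k := by
  obtain ⟨j, hj, y, hy⟩ :=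
    exists_eq_pow_mul_pow_of_forall_mem_zpowers hα hk (Units.mk0 (v - u) (sub_ne_zero.mpr h))
  exact ⟨j, hj, y, by simpa using congrArg Units.val hy⟩

abbrev generalizedPaley (F : Type*) [Field F] (k : ℕ) : SimpleGraph F :=
  SimpleGraph.fromRel fun a b : F => ∃ y : Fˣ, (y : F) ^ k = a - b

def generalizedPaley.affineIso {F : Type*} [Field F] (k : ℕ) (s : Fˣ) (n n' : F) :
    generalizedPaley F k ≃g generalizedPaley F k :=
  SimpleGraph.fromRelIso
    (((Equiv.subRight n).trans (Units.mulRight (s ^ k))).trans (Equiv.addRight n')) fun a b => by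
      simp only [Equiv.trans_apply, Equiv.subRight_apply, Units.mulRight_apply,
        Equiv.coe_addRight, add_sub_add_right_eq_sub, ← sub_mul, sub_sub_sub_cancel_right,
        Units.val_pow_eq_pow_val]
      exact exists_units_pow_eq_mul_pow_iff k (a - b) s

theorem generalizedPaley.affineIso_apply {F : Type*} [Field F] (k : ℕ) (s : Fˣ) (n n' x : F) :
    generalizedPaley.affineIso k s n n' x = (x - n) * (s : F) ^ k + n' := by
  rfl

/-- The paper's `f_{α,k}`: `f u v = j + 1` when `v - u ∈ α^j (Fˣ)^k`, and `f u u = 0`. -/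
structure IsCosetIndex {F : Type*} [Field F] (α : Fˣ) (k : ℕ) (f : F → F → Fin (k + 1)) :
    Prop where
  apply_self : ∀ u, f u u = 0
  apply_of_sub_eq : ∀ {u v : F} {j : ℕ}, j < k → ∀ y : Fˣ, v - u = (α : F) ^ j * (y : F) ^ k →
    f u v = ((j + 1 : ℕ) : Fin (k + 1))

namespace IsCosetIndex

variable {F : Type*} [Field F] {α : Fˣ} {k : ℕ} {f : F → F → Fin (k + 1)}

theorem val_apply_of_sub_eq (hf : IsCosetIndex α k f) {u v : F} {j : ℕ} (hj : j < k) (y : Fˣ)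
    (h : v - u = (α : F) ^ j * (y : F) ^ k) : (f u v : ℕ) = j + 1 := by
  rw [hf.apply_of_sub_eq hj y h, Fin.val_cast_of_lt (by omega)]

theorem eq_zero_iff [Fintype F] (hf : IsCosetIndex α k f) (hα : ∀ x : Fˣ, x ∈ Subgroup.zpowers α)
    (hk : 0 < k) {n v : F} : f n v = 0 ↔ v = n := by
  refine ⟨fun h => by_contra fun hne => ?_, fun h => h ▸ hf.apply_self n⟩
  obtain ⟨j, hj, y, hy⟩ := exists_sub_eq_pow_mul_pow hα hk hne
  have := hf.val_apply_of_sub_eq hj y hy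
  simp [h] at this

theorem eq_iff_exists_sub_eq_mul_pow [Fintype F] (hf : IsCosetIndex α k f)
    (hα : ∀ x : Fˣ, x ∈ Subgroup.zpowers α) (hk : 0 < k) {n v n' v' : F} :
    f n v = f n' v' ↔ ∃ s : Fˣ, v' - n' = (v - n) * (s : F) ^ k := by
  by_cases hv : v = n
  · subst hv
    simp [hf.apply_self, eq_comm (a := (0 : Fin (k + 1))), hf.eq_zero_iff hα hk, sub_eq_zero]
  obtain ⟨j, hj, y, hy⟩ := exists_sub_eq_pow_mul_pow hα hk hv
  constructor
  · intro h
    have hv' : v' ≠ n' := fun hv' =>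
      hv ((hf.eq_zero_iff hα hk).mp (h.trans (hv' ▸ hf.apply_self n')))
    obtain ⟨j', hj', y', hy'⟩ := exists_sub_eq_pow_mul_pow hα hk hv'
    have hjj' : j = j' := by
      have := congrArg Fin.val h
      rw [hf.val_apply_of_sub_eq hj y hy, hf.val_apply_of_sub_eq hj' y' hy'] at this
      omega
    subst hjj'
    refine ⟨y⁻¹ * y', ?_⟩
    rw [hy', hy]
    push_cast
    rw [mul_pow, inv_pow]
    field_simp
  · rintro ⟨s, hs⟩
    have hs' : v' - n' = (α : F) ^ j * ((y * s : Fˣ) : F) ^ k := by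
      rw [hs, hy]
      push_cast
      ring
    rw [hf.apply_of_sub_eq hj y hy, hf.apply_of_sub_eq hj (y * s) hs']

end IsCosetIndex

theorem generalizedPaley_f_equitable_general {F : Type*} [Field F] [Fintype F]
    (k : ℕ) (hk : 0 < k)
    (α : Fˣ) (hα : ∀ x : Fˣ, x ∈ Subgroup.zpowers α)
    (f : F → F → Fin (k + 1))
    (hf0 : ∀ u : F, f u u = 0)
    (hfi : ∀ (u v : F) (i : ℕ), 1 ≤ i → i ≤ k →
      (∃ y : Fˣ, v - u = (α : F) ^ (i - 1) * (y : F) ^ k) → f u v = (i : Fin (k + 1))) :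
    (∀ n v : F, f n v = 0 ↔ v = n) ∧
      ∃ Q : Fin (k + 1) → Fin (k + 1) → ℕ, ∀ (n v : F) (i : Fin (k + 1)),
        (((SimpleGraph.fromRel (fun a b : F => ∃ y : Fˣ, (y : F) ^ k = a - b)).neighborFinset
              v).filter (fun u => f n u = i)).card = Q i (f n v) := by
  have hf : IsCosetIndex α k f :=
    ⟨hf0, fun {u v j} hj y h => hfi u v (j + 1) (by omega) hj ⟨y, by simpa using h⟩⟩
  refine ⟨fun n v => hf.eq_zero_iff hα hk, ?_⟩
  let count (i : Fin (k + 1)) (p : F × F) : ℕ :=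
    #{u ∈ (generalizedPaley F k).neighborFinset p.2 | f p.1 u = i}
  have hfactors (i : Fin (k + 1)) : (count i).FactorsThrough (Function.uncurry f) := by
    rintro ⟨n, v⟩ ⟨n', v'⟩ h
    obtain ⟨s, hs⟩ := (hf.eq_iff_exists_sub_eq_mul_pow hα hk).mp h
    let φ := generalizedPaley.affineIso k s n n'
    have hφ (x : F) : φ x - n' = (x - n) * (s : F) ^ k := by
      rw [generalizedPaley.affineIso_apply, add_sub_cancel_right]
    have hφv : φ v = v' := by rw [← sub_left_inj (a := n'), hφ, hs]
    have hlevel (x : F) : f n' (φ x) = f n x :=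
      ((hf.eq_iff_exists_sub_eq_mul_pow hα hk).mpr ⟨s, hφ x⟩).symm
    exact hφv ▸ SimpleGraph.card_filter_neighborFinset_iso φ hlevel v i
  exact ⟨fun i => Function.extend (Function.uncurry f) (count i) 0,
    fun n v i => ((hfactors i).extend_apply 0 (n, v)).symm⟩

/-- Let `q ≡ 1 (mod 2k)`, `α` a generator of `Fˣ`, and let
`f = f_{α,k} : F × F → {0,1,...,k}` be given by `f u v = i` when
`v − u ∈ α^{i−1}(Fˣ)^k` and `f u u = 0`.  Then the generalized Paley graph
`GP(q,k)` is `f`-equitable: for every `n`, the level sets of `f n ·` (namely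
`{n}` and the translated cosets `n + α^{i−1}(Fˣ)^k`) form an equitable partition
whose quotient matrix does not depend on `n`. -/
theorem generalizedPaley_f_equitable {F : Type*} [Field F] [Fintype F]
    (k : ℕ) (hk : 0 < k) (hdvd : 2 * k ∣ Fintype.card F - 1)
    (α : Fˣ) (hα : ∀ x : Fˣ, x ∈ Subgroup.zpowers α)
    (f : F → F → Fin (k + 1))
    (hf0 : ∀ u : F, f u u = 0)
    (hfi : ∀ (u v : F) (i : ℕ), 1 ≤ i → i ≤ k →
      (∃ y : Fˣ, v - u = (α : F) ^ (i - 1) * (y : F) ^ k) → f u v = (i : Fin (k + 1))) :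
    (∀ n v : F, f n v = 0 ↔ v = n) ∧
      ∃ Q : Fin (k + 1) → Fin (k + 1) → ℕ, ∀ (n v : F) (i : Fin (k + 1)),
        (((SimpleGraph.fromRel (fun a b : F => ∃ y : Fˣ, (y : F) ^ k = a - b)).neighborFinset
              v).filter (fun u => f n u = i)).card = Q i (f n v) :=
  generalizedPaley_f_equitable_general k hk α hα f hf0 hfi
end

section
/- The generalized Paley graph GP(q,k) is quasi-strongly regular: for any two adjacent vertices u, v, the number |N(u) ∩ N(v)| of common neighbors takes a single value c_1, and more generally |N(u) ∩ N(v)| depends only on the coset α^{i−1}(F_q*)^k containing u − v (value c_i for i = 1,...,k). -/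
open scoped Classical

/-- The generalized Paley graph `GP(q,k)` is quasi-strongly regular:
the number of common neighbors `|N(u) ∩ N(v)|` of two distinct vertices depends only
on the coset `α^{i−1}(Fˣ)^k` containing `u − v` (common value `c i`); in particular
it takes a single value `c 1` on adjacent pairs. -/
theorem generalizedPaley_quasiStronglyRegular {F : Type*} [Field F] [Fintype F]
    (k : ℕ) (hk : 0 < k) (hdvd : 2 * k ∣ Fintype.card F - 1)
    (α : Fˣ) (hα : ∀ x : Fˣ, x ∈ Subgroup.zpowers α)
    (G : SimpleGraph F)
    (hG : ∀ a b : F, G.Adj a b ↔ a ≠ b ∧ ∃ y : Fˣ, (y : F) ^ k = a - b) :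
    ∃ c : ℕ → ℕ, ∀ (i : ℕ), 1 ≤ i → i ≤ k → ∀ u v : F,
      (∃ y : Fˣ, u - v = (α : F) ^ (i - 1) * (y : F) ^ k) →
      (G.neighborFinset u ∩ G.neighborFinset v).card = c i := by
  refine ⟨fun i => (G.neighborFinset ((α : F) ^ (i - 1)) ∩ G.neighborFinset 0).card,
    fun i _ _ u v ⟨y, hy⟩ => ?_⟩
  have hEY : ((y⁻¹ : Fˣ) : F) ^ k * ((y : F)) ^ k = 1 := by
    rw [← mul_pow, ← Units.val_mul, inv_mul_cancel, Units.val_one, one_pow]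
  have hYE : ((y : F)) ^ k * ((y⁻¹ : Fˣ) : F) ^ k = 1 := by rw [mul_comm]; exact hEY
  have hY0 : ((y : F)) ^ k ≠ 0 := pow_ne_zero _ (Units.ne_zero y)
  apply Finset.card_bij' (fun w _ => (w - v) * ((y⁻¹ : Fˣ) : F) ^ k)
    (fun t _ => t * ((y : F)) ^ k + v)
  · intro w hw
    rw [Finset.mem_inter, SimpleGraph.mem_neighborFinset, SimpleGraph.mem_neighborFinset,
      hG, hG] at hw
    obtain ⟨⟨hne1, z1, hz1⟩, hne2, z2, hz2⟩ := hw
    rw [Finset.mem_inter, SimpleGraph.mem_neighborFinset, SimpleGraph.mem_neighborFinset,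
      hG, hG]
    refine ⟨⟨?_, z1 * y⁻¹, ?_⟩, ?_, z2 * y⁻¹, ?_⟩
    · intro h
      exact hne1 (by linear_combination hy + ((y : F)) ^ k * h + (w - v) * hEY : u = w)
    · rw [Units.val_mul, mul_pow, hz1]
      linear_combination ((y⁻¹ : Fˣ) : F) ^ k * hy + (α : F) ^ (i - 1) * hEY
    · intro h
      exact hne2 (by linear_combination ((y : F)) ^ k * h + (w - v) * hEY : v = w)
    · rw [Units.val_mul, mul_pow, hz2]
      ring
  · intro t ht
    rw [Finset.mem_inter, SimpleGraph.mem_neighborFinset, SimpleGraph.mem_neighborFinset,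
      hG, hG] at ht
    obtain ⟨⟨hne1, z1, hz1⟩, hne2, z2, hz2⟩ := ht
    rw [Finset.mem_inter, SimpleGraph.mem_neighborFinset, SimpleGraph.mem_neighborFinset,
      hG, hG]
    refine ⟨⟨?_, z1 * y, ?_⟩, ?_, z2 * y, ?_⟩
    · intro h
      have h0 : ((α : F) ^ (i - 1) - t) * ((y : F)) ^ k = 0 := by linear_combination h - hy
      rcases mul_eq_zero.mp h0 with h' | h'
      · exact hne1 (by linear_combination h')
      · exact hY0 h'
    · rw [Units.val_mul, mul_pow, hz1]
      linear_combination -hy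
    · intro h
      have h0 : t * ((y : F)) ^ k = 0 := by linear_combination -h
      rcases mul_eq_zero.mp h0 with h' | h'
      · exact hne2 h'.symm
      · exact hY0 h'
    · rw [Units.val_mul, mul_pow, hz2]
      ring
  · intro w _
    linear_combination (w - v) * hEY
  · intro t _
    linear_combination t * hYE
end

section
/- Let GP(q,k) with q ≡ 1 (mod 2k) have quotient matrix q_{ij} for the partition by cosets α^{i−1}(F_q*)^k of F_q* together with {0}. Then the diagonal entries satisfy q_{i,i} = c_{k−i+2} for 1 ≤ i ≤ k (indices of c taken in {1,...,k}, with c_{k+1} interpreted as c_1), where c_j is the number of common neighbors of two vertices whose difference lies in α^{j−1}(F_q*)^k. -/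
open scoped Classical
open Fin.NatCast

/-!
Let `S` be the set of `k`-th powers in `Fˣ`, `a = α^(i-1)` and `b = α^(j-1)` with `j = k - i + 2`
(or `j = 1` when `i = 1`), so that `a * b ∈ S`. The Möbius map `w ↦ b w / (w - a)` satisfies
`b w / (w - a) - b = a b / (w - a)`, and hence carries the neighbours `w` of `a` lying in the coset
`a S` bijectively onto the common neighbours of `b` and `0`; its inverse is `x ↦ a x / (x - b)`.
-/

open Finset

section UnitsImage

variable {F : Type*} [Field F] {H : Subgroup Fˣ} {x y : F}

lemma ne_zero_of_mem_image_val (hx : x ∈ Units.val '' (H : Set Fˣ)) : x ≠ 0 := by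
  obtain ⟨u, -, rfl⟩ := hx
  exact u.ne_zero

lemma mul_mem_image_val (hx : x ∈ Units.val '' (H : Set Fˣ))
    (hy : y ∈ Units.val '' (H : Set Fˣ)) :
    x * y ∈ Units.val '' (H : Set Fˣ) := by
  obtain ⟨u, hu, rfl⟩ := hx
  obtain ⟨v, hv, rfl⟩ := hy
  exact ⟨u * v, H.mul_mem hu hv, rfl⟩

lemma div_mem_image_val (hx : x ∈ Units.val '' (H : Set Fˣ))
    (hy : y ∈ Units.val '' (H : Set Fˣ)) :
    x / y ∈ Units.val '' (H : Set Fˣ) := by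
  obtain ⟨u, hu, rfl⟩ := hx
  obtain ⟨v, hv, rfl⟩ := hy
  exact ⟨u / v, H.div_mem hu hv, Units.val_div_eq_div_val u v⟩

lemma mem_image_val_range_powMonoidHom {k : ℕ} :
    x ∈ Units.val '' ((powMonoidHom k : Fˣ →* Fˣ).range : Set Fˣ) ↔
      ∃ y : Fˣ, (y : F) ^ k = x := by
  simp

end UnitsImage

section Mobius

variable {F : Type*} [Field F] {a b w : F}

lemma mul_div_sub_sub (hw : w ≠ a) : b * w / (w - a) - b = a * b / (w - a) := by
  field_simp [sub_ne_zero.2 hw]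
  ring

lemma mul_div_sub_comp_mul_div_sub (ha : a ≠ 0) (hb : b ≠ 0) (hw : w ≠ a) :
    a * (b * w / (w - a)) / (b * w / (w - a) - b) = w := by
  have hwa : w - a ≠ 0 := sub_ne_zero.2 hw
  rw [mul_div_sub_sub hw]
  field_simp

end Mobius

section Counting

variable {F : Type*} [Field F] [Fintype F] {H : Subgroup Fˣ}

theorem card_sub_mem_div_mem_eq_card_sub_mem_mem {a b : F} (ha : a ≠ 0)
    (hab : a * b ∈ Units.val '' (H : Set Fˣ)) :
    #{w | w - a ∈ Units.val '' (H : Set Fˣ) ∧ w / a ∈ Units.val '' (H : Set Fˣ)} =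
      #{x | x - b ∈ Units.val '' (H : Set Fˣ) ∧ x ∈ Units.val '' (H : Set Fˣ)} := by
  have hb : b ≠ 0 := right_ne_zero_of_mul (ne_zero_of_mem_image_val hab)
  refine card_bij' (fun w _ => b * w / (w - a)) (fun x _ => a * x / (x - b)) ?_ ?_ ?_ ?_
  · intro w hw
    simp only [mem_filter, mem_univ, true_and] at hw ⊢
    have hwa : w ≠ a := sub_ne_zero.1 (ne_zero_of_mem_image_val hw.1)
    refine ⟨?_, ?_⟩
    · rw [mul_div_sub_sub hwa]
      exact div_mem_image_val hab hw.1
    · have : b * w / (w - a) = a * b * (w / a) / (w - a) := by field_simp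
      rw [this]
      exact div_mem_image_val (mul_mem_image_val hab hw.2) hw.1
  · intro x hx
    simp only [mem_filter, mem_univ, true_and] at hx ⊢
    have hxb : x ≠ b := sub_ne_zero.1 (ne_zero_of_mem_image_val hx.1)
    refine ⟨?_, ?_⟩
    · rw [mul_div_sub_sub hxb, mul_comm b a]
      exact div_mem_image_val hab hx.1
    · have : a * x / (x - b) / a = x / (x - b) := by field_simp
      rw [this]
      exact div_mem_image_val hx.2 hx.1
  · intro w hw
    simp only [mem_filter, mem_univ, true_and] at hw
    exact mul_div_sub_comp_mul_div_sub ha hb (sub_ne_zero.1 (ne_zero_of_mem_image_val hw.1))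
  · intro x hx
    simp only [mem_filter, mem_univ, true_and] at hx
    exact mul_div_sub_comp_mul_div_sub hb ha (sub_ne_zero.1 (ne_zero_of_mem_image_val hx.1))

end Counting

theorem generalizedPaley_quotient_diagonal_general {F : Type*} [Field F] [Fintype F]
    (k : ℕ) (α : Fˣ)
    (G : SimpleGraph F)
    (hG : ∀ a b : F, G.Adj a b ↔ a ≠ b ∧ ∃ y : Fˣ, (y : F) ^ k = a - b)
    (C : F → Fin (k + 1))
    (hCi : ∀ (v : F) (i : ℕ), 1 ≤ i → i ≤ k →
      (C v = (i : Fin (k + 1)) ↔ ∃ y : Fˣ, v = (α : F) ^ (i - 1) * (y : F) ^ k))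
    (Q : Fin (k + 1) → Fin (k + 1) → ℕ)
    (hQ : ∀ (v : F) (i : Fin (k + 1)),
      ((G.neighborFinset v).filter (fun u => C u = i)).card = Q i (C v))
    (c : ℕ → ℕ)
    (hc : ∀ (j : ℕ), 1 ≤ j → j ≤ k → ∀ u v : F,
      (∃ y : Fˣ, u - v = (α : F) ^ (j - 1) * (y : F) ^ k) →
      (G.neighborFinset u ∩ G.neighborFinset v).card = c j) :
    ∀ i : ℕ, 1 ≤ i → i ≤ k →
      Q (i : Fin (k + 1)) (i : Fin (k + 1)) = c (if i = 1 then 1 else k - i + 2) := by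
  intro i hi1 hik
  set S : Set F := Units.val '' ((powMonoidHom k : Fˣ →* Fˣ).range : Set Fˣ) with hS
  have hN : ∀ v u : F, u ∈ G.neighborFinset v ↔ u - v ∈ S := fun v u => by
    rw [SimpleGraph.mem_neighborFinset, G.adj_comm, hG, hS, mem_image_val_range_powMonoidHom]
    refine ⟨fun h => h.2, fun ⟨y, hy⟩ => ⟨?_, y, hy⟩⟩
    exact sub_ne_zero.1 (hy ▸ pow_ne_zero _ y.ne_zero)
  have hCi' : ∀ u : F, C u = i ↔ u / (α : F) ^ (i - 1) ∈ S := fun u => by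
    rw [hCi u i hi1 hik, hS, mem_image_val_range_powMonoidHom]
    refine exists_congr fun y => ?_
    rw [eq_div_iff (pow_ne_zero _ α.ne_zero), mul_comm, eq_comm]
  set j : ℕ := if i = 1 then 1 else k - i + 2 with hj
  have hj1 : 1 ≤ j := by rw [hj]; split <;> omega
  have hjk : j ≤ k := by rw [hj]; split <;> omega
  -- `(i - 1) + (j - 1)` is `0` or `k`
  have hab : (α : F) ^ (i - 1) * (α : F) ^ (j - 1) ∈ S := by
    rw [hS, mem_image_val_range_powMonoidHom, ← pow_add]
    by_cases h1 : i = 1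
    · exact ⟨1, by simp [hj, h1]⟩
    · exact ⟨α, by rw [hj, if_neg h1]; congr 1; omega⟩
  have hCa : C ((α : F) ^ (i - 1)) = i := (hCi _ i hi1 hik).2 ⟨1, by simp⟩
  have hcb := hc j hj1 hjk ((α : F) ^ (j - 1)) 0 ⟨1, by simp⟩
  rw [← hcb, ← hCa, ← hQ, hCa]
  convert card_sub_mem_div_mem_eq_card_sub_mem_mem (pow_ne_zero _ α.ne_zero) hab using 2 <;>
    ext u <;>
    simp only [mem_filter, mem_inter, mem_univ, true_and, sub_zero, hN, hCi', hS]

/-- With `Q` the quotient matrix of the coset partition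
`{{0}, (Fˣ)^k, ..., α^{k−1}(Fˣ)^k}` of `GP(q,k)` and `c j` the number of common
neighbors of two vertices whose difference lies in `α^{j−1}(Fˣ)^k`, the diagonal
entries satisfy `Q i i = c (k − i + 2)` for `1 ≤ i ≤ k`, where the index `k + 1`
(arising for `i = 1`) is interpreted as `1`. -/
theorem generalizedPaley_quotient_diagonal {F : Type*} [Field F] [Fintype F]
    (k : ℕ) (hk : 0 < k) (hdvd : 2 * k ∣ Fintype.card F - 1)
    (α : Fˣ) (hα : ∀ x : Fˣ, x ∈ Subgroup.zpowers α)
    (G : SimpleGraph F)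
    (hG : ∀ a b : F, G.Adj a b ↔ a ≠ b ∧ ∃ y : Fˣ, (y : F) ^ k = a - b)
    (C : F → Fin (k + 1))
    (hC0 : ∀ v : F, C v = 0 ↔ v = 0)
    (hCi : ∀ (v : F) (i : ℕ), 1 ≤ i → i ≤ k →
      (C v = (i : Fin (k + 1)) ↔ ∃ y : Fˣ, v = (α : F) ^ (i - 1) * (y : F) ^ k))
    (Q : Fin (k + 1) → Fin (k + 1) → ℕ)
    (hQ : ∀ (v : F) (i : Fin (k + 1)),
      ((G.neighborFinset v).filter (fun u => C u = i)).card = Q i (C v))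
    (c : ℕ → ℕ)
    (hc : ∀ (j : ℕ), 1 ≤ j → j ≤ k → ∀ u v : F,
      (∃ y : Fˣ, u - v = (α : F) ^ (j - 1) * (y : F) ^ k) →
      (G.neighborFinset u ∩ G.neighborFinset v).card = c j) :
    ∀ i : ℕ, 1 ≤ i → i ≤ k →
      Q (i : Fin (k + 1)) (i : Fin (k + 1)) = c (if i = 1 then 1 else k - i + 2) :=
  generalizedPaley_quotient_diagonal_general k α G hG C hCi Q hQ c hc
end

section
/- Let GP(q,4) (q ≡ 1 mod 8) be quasi-strongly regular with common-neighbor parameters c_1, c_2, c_3, c_4, where c_i = |N(0) ∩ N(v)| for v ∈ α^{i−1}(F_q*)^4. Then the parameters satisfy c_2 + c_4 = 2 c_3. -/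
/-!
Write `C a = α ^ a (Fˣ) ^ 4` and let `(a, b)` be the number of `x ∈ C a` with `x - 1 ∈ C b`
(cyclotomic numbers of order 4). Divided by `α ^ (i - 1)`, the common neighbours of
`α ^ (i - 1)` and `0` become the `x ∈ C (1 - i)` with `x - 1 ∈ C (1 - i)`, so `c 2, c 3, c 4`
are `(3, 3), (2, 2), (1, 1)`. Since `-1` is a fourth power, `x ↦ 1 - x` gives
`(a, b) = (b, a)`, and `x ↦ x / (x - 1)` gives `(a, b) = (a - b, -b)`.
Sorting `x ∈ C 1` and `x ∈ C 2` by the class of `x - 1` gives two row sums, both equal to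
`|C 1| = |C 2|`; by the symmetries they are `c 2 + c 4 + 2 (2, 1)` and `2 c 3 + 2 (2, 1)`.
-/

open scoped Classical

open Finset

section Field

variable {F : Type*} [Field F]

def cyclotomicClass (α : Fˣ) (e : ℕ) (a : ℤ) : Set F :=
  {x | ∃ y : Fˣ, x = ↑(α ^ a * y ^ e)}

variable {α : Fˣ} {e : ℕ} {a b c : ℤ} {x t : F}

theorem ne_zero_of_mem_cyclotomicClass (hx : x ∈ cyclotomicClass α e a) : x ≠ 0 := by
  obtain ⟨y, rfl⟩ := hx
  exact Units.ne_zero _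

theorem zpow_mem_cyclotomicClass (c : ℤ) : (α : F) ^ c ∈ cyclotomicClass α e c :=
  ⟨1, by simp⟩

theorem mul_mem_cyclotomicClass {y : F} (hx : x ∈ cyclotomicClass α e a)
    (hy : y ∈ cyclotomicClass α e b) : x * y ∈ cyclotomicClass α e (a + b) := by
  obtain ⟨u, rfl⟩ := hx
  obtain ⟨v, rfl⟩ := hy
  exact ⟨u * v, by rw [← Units.val_mul, zpow_add, mul_pow, mul_mul_mul_comm]⟩

theorem inv_mem_cyclotomicClass (hx : x ∈ cyclotomicClass α e a) :
    x⁻¹ ∈ cyclotomicClass α e (-a) := by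
  obtain ⟨u, rfl⟩ := hx
  exact ⟨u⁻¹, by rw [← Units.val_inv_eq_inv_val, mul_inv, zpow_neg, inv_pow, mul_comm]⟩

theorem mul_mem_cyclotomicClass_iff (ht : t ∈ cyclotomicClass α e c) :
    t * x ∈ cyclotomicClass α e a ↔ x ∈ cyclotomicClass α e (a - c) := by
  refine ⟨fun h => ?_, fun h => by simpa using mul_mem_cyclotomicClass ht h⟩
  have := mul_mem_cyclotomicClass (inv_mem_cyclotomicClass ht) h
  rwa [inv_mul_cancel_left₀ (ne_zero_of_mem_cyclotomicClass ht), neg_add_eq_sub] at this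

theorem cyclotomicClass_add_mul_subset (a k : ℤ) :
    cyclotomicClass α e (a + e * k) ⊆ cyclotomicClass (F := F) α e a := by
  rintro _ ⟨y, rfl⟩
  exact ⟨α ^ k * y, by rw [mul_pow, ← zpow_natCast (α ^ k), ← zpow_mul, zpow_add, mul_assoc,
    mul_comm k]⟩

theorem cyclotomicClass_congr (h : (e : ℤ) ∣ a - b) :
    cyclotomicClass α e a = cyclotomicClass (F := F) α e b := by
  obtain ⟨k, hk⟩ := h
  obtain rfl : a = b + e * k := by omega
  refine (cyclotomicClass_add_mul_subset b k).antisymm ?_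
  simpa using cyclotomicClass_add_mul_subset (F := F) (α := α) (e := e) (b + e * k) (-k)

theorem neg_mem_cyclotomicClass_iff (hneg : (-1 : F) ∈ cyclotomicClass α e 0) :
    -x ∈ cyclotomicClass α e a ↔ x ∈ cyclotomicClass α e a := by
  rw [neg_eq_neg_one_mul, mul_mem_cyclotomicClass_iff hneg, sub_zero]

theorem dvd_of_one_mem_cyclotomicClass (hα : ∀ x : Fˣ, x ∈ Subgroup.zpowers α)
    (he : e ∣ orderOf α) (h : (1 : F) ∈ cyclotomicClass α e a) : (e : ℤ) ∣ a := by
  obtain ⟨y, hy⟩ := h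
  obtain ⟨m, rfl⟩ := Subgroup.mem_zpowers_iff.mp (hα y)
  have hone : α ^ (a + e * m) = 1 := by
    rw [zpow_add, mul_comm (e : ℤ), zpow_mul, zpow_natCast]
    exact Units.ext hy.symm
  have := (Int.natCast_dvd_natCast.mpr he).trans (orderOf_dvd_iff_zpow_eq_one.mpr hone)
  exact (Int.dvd_add_left (dvd_mul_right _ _)).mp this

theorem dvd_sub_of_mem_cyclotomicClass (hα : ∀ x : Fˣ, x ∈ Subgroup.zpowers α)
    (he : e ∣ orderOf α) (ha : x ∈ cyclotomicClass α e a) (hb : x ∈ cyclotomicClass α e b) :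
    (e : ℤ) ∣ a - b := by
  have := mul_mem_cyclotomicClass ha (inv_mem_cyclotomicClass hb)
  rw [mul_inv_cancel₀ (ne_zero_of_mem_cyclotomicClass ha), ← sub_eq_add_neg] at this
  exact dvd_of_one_mem_cyclotomicClass hα he this

theorem div_sub_one_mem_cyclotomicClass (hx : x ∈ cyclotomicClass α e a)
    (hx1 : x - 1 ∈ cyclotomicClass α e b) :
    x / (x - 1) ∈ cyclotomicClass α e (a - b) ∧ x / (x - 1) - 1 ∈ cyclotomicClass α e (-b) := by
  refine ⟨?_, ?_⟩
  · rw [div_eq_mul_inv, sub_eq_add_neg]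
    exact mul_mem_cyclotomicClass hx (inv_mem_cyclotomicClass hx1)
  · rw [div_sub_one (ne_zero_of_mem_cyclotomicClass hx1), sub_sub_cancel, one_div]
    exact inv_mem_cyclotomicClass hx1

end Field

section FiniteField

variable {F : Type*} [Field F] [Fintype F] {α : Fˣ} {e : ℕ} {a b c : ℤ} {x t : F}

theorem orderOf_eq_card_sub_one (hα : ∀ x : Fˣ, x ∈ Subgroup.zpowers α) :
    orderOf α = Fintype.card F - 1 := by
  rw [orderOf_eq_card_of_forall_mem_zpowers hα, Nat.card_eq_fintype_card, Fintype.card_units]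

theorem neg_one_mem_cyclotomicClass_zero (h : 2 * e ∣ orderOf α) :
    (-1 : F) ∈ cyclotomicClass α e 0 := by
  obtain ⟨s, hs⟩ := h
  have hprim : IsPrimitiveRoot (α : F) (e * s * 2) :=
    IsPrimitiveRoot.coe_units_iff.mpr (by rw [mul_comm _ 2, ← mul_assoc, ← hs]; exact .orderOf α)
  have hpos : 0 < e * s * 2 := by have := orderOf_pos α; rw [hs] at this; linarith
  refine ⟨α ^ s, ?_⟩
  rw [zpow_zero, one_mul, ← pow_mul, Units.val_pow_eq_pow_val, mul_comm s]
  exact ((hprim.pow hpos rfl).eq_neg_one_of_two_right).symm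

theorem exists_lt_mem_cyclotomicClass (hα : ∀ x : Fˣ, x ∈ Subgroup.zpowers α) (he : 0 < e)
    (hx : x ≠ 0) : ∃ b < e, x ∈ cyclotomicClass α e b := by
  obtain ⟨n, hn : α ^ n = Units.mk0 x hx⟩ := mem_powers_iff_mem_zpowers.mpr (hα (Units.mk0 x hx))
  refine ⟨n % e, Nat.mod_lt n he, α ^ (n / e), ?_⟩
  rw [zpow_natCast, ← pow_mul, ← pow_add, Nat.mod_add_div', hn, Units.val_mk0]

noncomputable def cyclotomicNumber (α : Fˣ) (e : ℕ) (a b : ℤ) : ℕ :=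
  #{x : F | x ∈ cyclotomicClass α e a ∧ x - 1 ∈ cyclotomicClass α e b}

theorem cyclotomicNumber_congr {a' b' : ℤ} (ha : (e : ℤ) ∣ a - a') (hb : (e : ℤ) ∣ b - b') :
    cyclotomicNumber α e a b = cyclotomicNumber α e a' b' := by
  simp only [cyclotomicNumber, cyclotomicClass_congr ha, cyclotomicClass_congr hb]

theorem cyclotomicNumber_comm (hneg : (-1 : F) ∈ cyclotomicClass α e 0) (a b : ℤ) :
    cyclotomicNumber α e a b = cyclotomicNumber α e b a := by
  refine card_equiv (Equiv.subLeft 1) fun x => ?_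
  simp only [mem_filter, mem_univ, true_and, Equiv.subLeft_apply, sub_sub_cancel_left]
  rw [← neg_sub x 1, neg_mem_cyclotomicClass_iff hneg, neg_mem_cyclotomicClass_iff hneg, and_comm]

theorem cyclotomicNumber_eq_sub_neg (a b : ℤ) :
    cyclotomicNumber α e a b = cyclotomicNumber α e (a - b) (-b) := by
  have hinv : ∀ y : F, y - 1 ≠ 0 → y / (y - 1) / (y / (y - 1) - 1) = y := fun y hy => by
    rw [div_sub_one hy, sub_sub_cancel, div_div_div_cancel_right₀ hy, div_one]
  refine card_nbij' (fun x => x / (x - 1)) (fun x => x / (x - 1)) ?_ ?_ ?_ ?_ <;> intro x hx <;>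
    simp only [coe_filter, mem_univ, true_and, Set.mem_ofPred_eq] at hx ⊢
  · exact div_sub_one_mem_cyclotomicClass hx.1 hx.2
  · simpa using div_sub_one_mem_cyclotomicClass hx.1 hx.2
  · exact hinv x (ne_zero_of_mem_cyclotomicClass hx.2)
  · exact hinv x (ne_zero_of_mem_cyclotomicClass hx.2)

theorem card_filter_mem_cyclotomicClass_sub (ht : t ∈ cyclotomicClass α e c) (a b : ℤ) :
    #{z : F | z ∈ cyclotomicClass α e a ∧ z - t ∈ cyclotomicClass α e b} =
      cyclotomicNumber α e (a - c) (b - c) := by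
  refine (card_equiv (Equiv.mulLeft₀ t (ne_zero_of_mem_cyclotomicClass ht)) fun x => ?_).symm
  simp only [mem_filter, mem_univ, true_and, Equiv.mulLeft₀_apply]
  rw [← mul_sub_one, mul_mem_cyclotomicClass_iff ht, mul_mem_cyclotomicClass_iff ht]

theorem card_cyclotomicClass_eq (a b : ℤ) :
    #{x : F | x ∈ cyclotomicClass α e a} = #{x : F | x ∈ cyclotomicClass α e b} := by
  have ht := zpow_mem_cyclotomicClass (F := F) (α := α) (e := e) (b - a)
  refine card_equiv (Equiv.mulLeft₀ _ (ne_zero_of_mem_cyclotomicClass ht)) fun x => ?_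
  simp only [mem_filter, mem_univ, true_and, Equiv.mulLeft₀_apply]
  rw [mul_mem_cyclotomicClass_iff ht, sub_sub_cancel]

theorem sum_cyclotomicNumber (hα : ∀ x : Fˣ, x ∈ Subgroup.zpowers α) (he : e ∣ orderOf α)
    (ha : ¬ (e : ℤ) ∣ a) :
    ∑ b ∈ range e, cyclotomicNumber α e a b = #{x : F | x ∈ cyclotomicClass α e a} := by
  have he0 : 0 < e := Nat.pos_of_dvd_of_pos he (orderOf_pos α)
  have hdisj : ((range e : Finset ℕ) : Set ℕ).PairwiseDisjoint fun b : ℕ =>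
      ({x : F | x ∈ cyclotomicClass α e a ∧ x - 1 ∈ cyclotomicClass α e b} : Finset F) := by
    intro b hb b' hb' hne
    refine disjoint_filter.mpr fun x _ hxb hxb' => hne ?_
    have hdvd := dvd_sub_of_mem_cyclotomicClass hα he hxb.2 hxb'.2
    have hlt : |(b : ℤ) - b'| < e := by
      simp only [coe_range, Set.mem_Iio] at hb hb'
      rw [abs_sub_lt_iff]; omega
    have := Int.eq_zero_of_abs_lt_dvd hdvd hlt
    omega
  unfold cyclotomicNumber
  rw [← card_biUnion hdisj]
  congr 1
  ext x
  simp only [mem_biUnion, mem_range, mem_filter, mem_univ, true_and]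
  refine ⟨fun ⟨_, _, hx, _⟩ => hx, fun hx => ?_⟩
  have hx1 : x - 1 ≠ 0 := by
    intro h
    rw [sub_eq_zero.mp h] at hx
    exact ha (dvd_of_one_mem_cyclotomicClass hα he hx)
  obtain ⟨b, hb, hxb⟩ := exists_lt_mem_cyclotomicClass hα he0 hx1
  exact ⟨b, hb, hx, hxb⟩

theorem card_neighborFinset_inter_eq_cyclotomicNumber (G : SimpleGraph F)
    (hG : ∀ u v, G.Adj u v ↔ u - v ∈ cyclotomicClass α e 0)
    (hneg : (-1 : F) ∈ cyclotomicClass α e 0) (ht : t ∈ cyclotomicClass α e c) :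
    #(G.neighborFinset t ∩ G.neighborFinset 0) = cyclotomicNumber α e (-c) (-c) := by
  rw [← zero_sub c, ← card_filter_mem_cyclotomicClass_sub ht]
  congr 1
  ext z
  simp only [mem_inter, SimpleGraph.mem_neighborFinset, hG, mem_filter, mem_univ, true_and,
    zero_sub]
  rw [← neg_sub z t, neg_mem_cyclotomicClass_iff hneg, neg_mem_cyclotomicClass_iff hneg, and_comm]

theorem cyclotomicNumber_four_relation (hα : ∀ x : Fˣ, x ∈ Subgroup.zpowers α)
    (h8 : 8 ∣ orderOf α) :
    cyclotomicNumber α 4 (-1) (-1) + cyclotomicNumber α 4 (-3) (-3) =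
      2 * cyclotomicNumber α 4 (-2) (-2) := by
  set N := cyclotomicNumber α 4
  have hneg : (-1 : F) ∈ cyclotomicClass α 4 0 := neg_one_mem_cyclotomicClass_zero h8
  have row (a : ℤ) (ha : ¬ (4 : ℤ) ∣ a) :
      N a 0 + N a 1 + N a 2 + N a 3 = #{x : F | x ∈ cyclotomicClass α 4 a} := by
    simpa [sum_range_succ] using sum_cyclotomicNumber hα ((by norm_num : 4 ∣ 8).trans h8) ha
  have rows : N 1 0 + N 1 1 + N 1 2 + N 1 3 = N 2 0 + N 2 1 + N 2 2 + N 2 3 := by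
    rw [row 1 (by norm_num), row 2 (by norm_num), card_cyclotomicClass_eq]
  have h10 : N 1 0 = N (-1) (-1) := by
    simpa using (cyclotomicNumber_comm hneg 1 0).trans (cyclotomicNumber_eq_sub_neg 0 1)
  have h11 : N 1 1 = N (-3) (-3) := cyclotomicNumber_congr (by norm_num) (by norm_num)
  have h12 : N 1 2 = N 2 1 := cyclotomicNumber_comm hneg 1 2
  have h13 : N 1 3 = N 2 1 :=
    (cyclotomicNumber_eq_sub_neg 1 3).trans (cyclotomicNumber_congr (by norm_num) (by norm_num))
  have h20 : N 2 0 = N (-2) (-2) := by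
    simpa using (cyclotomicNumber_comm hneg 2 0).trans (cyclotomicNumber_eq_sub_neg 0 2)
  have h22 : N 2 2 = N (-2) (-2) := cyclotomicNumber_congr (by norm_num) (by norm_num)
  have h23 : N 2 3 = N 1 3 := ((cyclotomicNumber_eq_sub_neg 2 3).trans
    (cyclotomicNumber_congr (by norm_num) (by norm_num))).trans (cyclotomicNumber_comm hneg 3 1)
  omega

end FiniteField

/-- Let `GP(q,4)` (with `q ≡ 1 (mod 8)`, `α` a generator of `Fˣ`) be
quasi-strongly regular with common-neighbor parameters `c 1, c 2, c 3, c 4`, where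
`c i = |N(u) ∩ N(v)|` whenever `u − v ∈ α^{i−1}(Fˣ)⁴`.  Then `c 2 + c 4 = 2·c 3`. -/
theorem generalizedPaley4_parameter_relation {F : Type*} [Field F] [Fintype F]
    (hdvd : 8 ∣ Fintype.card F - 1)
    (α : Fˣ) (hα : ∀ x : Fˣ, x ∈ Subgroup.zpowers α)
    (G : SimpleGraph F)
    (hG : ∀ a b : F, G.Adj a b ↔ a ≠ b ∧ ∃ y : Fˣ, (y : F) ^ 4 = a - b)
    (c : ℕ → ℕ)
    (hc : ∀ (i : ℕ), 1 ≤ i → i ≤ 4 → ∀ u v : F,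
      (∃ y : Fˣ, u - v = (α : F) ^ (i - 1) * (y : F) ^ 4) →
      (G.neighborFinset u ∩ G.neighborFinset v).card = c i) :
    c 2 + c 4 = 2 * c 3 := by
  have h8 : 8 ∣ orderOf α := orderOf_eq_card_sub_one hα ▸ hdvd
  have hneg : (-1 : F) ∈ cyclotomicClass α 4 0 := neg_one_mem_cyclotomicClass_zero h8
  have hadj (u v : F) : G.Adj u v ↔ u - v ∈ cyclotomicClass α 4 0 := by
    rw [hG]
    refine ⟨fun ⟨_, y, hy⟩ => ⟨y, by simp [hy]⟩, fun ⟨y, hy⟩ => ⟨?_, y, by simp [hy]⟩⟩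
    exact sub_ne_zero.mp (hy ▸ Units.ne_zero _)
  have hci (i : ℕ) (h1 : 1 ≤ i) (h4 : i ≤ 4) :
      c i = cyclotomicNumber α 4 (-(i - 1 : ℕ)) (-(i - 1 : ℕ)) := by
    rw [← hc i h1 h4 ((α : F) ^ (i - 1)) 0 ⟨1, by simp⟩]
    exact card_neighborFinset_inter_eq_cyclotomicNumber G hadj hneg
      (zpow_natCast (α : F) (i - 1) ▸ zpow_mem_cyclotomicClass _)
  rw [hci 2 (by norm_num) (by norm_num), hci 3 (by norm_num) (by norm_num),
    hci 4 (by norm_num) (by norm_num)]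
  simpa using cyclotomicNumber_four_relation hα h8
end

section
/- Let G be a distance-regular graph with valency k, diameter Δ, and intersection array {b_0=k,...,b_{Δ−1}; c_1=1,...,c_Δ}. Define k_0 = 1 and k_i = (b_{i−1}/c_i) k_{i−1}. Then the average hitting time from a vertex u to a vertex v at distance i satisfies H(G;(v,u)) = ∑_{j=1}^{i} (k / (k_{j−1} b_{j−1})) ∑_{l=j}^{Δ} k_l. -/
/-!
Let `f n` be the right-hand side of the formula for `dist u v = n`. A vertex at distance `i ≥ 1`
from `v` has `c i` neighbours at distance `i - 1`, `b i` at distance `i + 1` and the rest at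
distance `i`, so `u ↦ f (dist v u)` satisfies the hitting-time recurrence as soon as
`c i (f i - f (i-1)) = k + b i (f (i+1) - f i)`. This holds because
`k_(j-1) b (j-1) (f j - f (j-1)) = k ∑_{l=j}^Δ k_l` and `c i k_i = b (i-1) k_(i-1)`: after
multiplying by `k_i`, both sides become `k ∑_{l=i}^Δ k_l`. On a finite connected graph the
recurrence together with `H v v = 0` has only one solution, by the maximum principle.
-/

open Finset

lemma kseq_mul_b_ne_zero {Δ : ℕ} {b c kseq : ℕ → ℕ} (hkseq0 : kseq 0 = 1)
    (hkseq : ∀ i : ℕ, 1 ≤ i → i ≤ Δ → c i * kseq i = b (i - 1) * kseq (i - 1))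
    (hb : ∀ n < Δ, b n ≠ 0) : ∀ n < Δ, kseq n * b n ≠ 0 := by
  intro n
  induction n with
  | zero => intro h; simp [hkseq0, hb 0 h]
  | succ n ih =>
    intro h
    have hrec := hkseq (n + 1) (by omega) h.le
    simp only [Nat.add_sub_cancel] at hrec
    have hk : kseq (n + 1) ≠ 0 :=
      right_ne_zero_of_mul (hrec ▸ mul_comm (kseq n) (b n) ▸ ih (by omega))
    exact mul_ne_zero hk (hb _ h)

noncomputable def hittingTimeOfDist (k Δ : ℕ) (b kseq : ℕ → ℕ) (n : ℕ) : ℝ :=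
  ∑ j ∈ Icc 1 n, ((k : ℝ) / ((kseq (j - 1) : ℝ) * (b (j - 1) : ℝ))) *
    ∑ l ∈ Icc j Δ, (kseq l : ℝ)

section hittingTimeOfDist

variable {k Δ : ℕ} {b kseq : ℕ → ℕ}

@[simp]
lemma hittingTimeOfDist_zero : hittingTimeOfDist k Δ b kseq 0 = 0 := by
  simp [hittingTimeOfDist]

lemma mul_hittingTimeOfDist_succ_sub (n : ℕ) (hn : n < Δ → kseq n * b n ≠ 0) :
    (kseq n * b n : ℝ) * (hittingTimeOfDist k Δ b kseq (n + 1) - hittingTimeOfDist k Δ b kseq n)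
      = k * ∑ l ∈ Icc (n + 1) Δ, (kseq l : ℝ) := by
  have hsucc : hittingTimeOfDist k Δ b kseq (n + 1) - hittingTimeOfDist k Δ b kseq n =
      (k : ℝ) / (kseq n * b n) * ∑ l ∈ Icc (n + 1) Δ, (kseq l : ℝ) := by
    rw [hittingTimeOfDist, hittingTimeOfDist, ← insert_Icc_right_eq_Icc_add_one (by omega),
      sum_insert (by simp)]
    simp
  rw [hsucc]
  by_cases h : n < Δ
  · have hne : (kseq n * b n : ℝ) ≠ 0 := by exact_mod_cast hn h
    rw [← mul_assoc, mul_div_cancel₀ _ hne]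
  · simp [Icc_eq_empty_of_lt (show Δ < n + 1 by omega)]

lemma hittingTimeOfDist_three_term {c : ℕ → ℕ} (m : ℕ) (hm : m + 1 ≤ Δ)
    (hkseq : c (m + 1) * kseq (m + 1) = b m * kseq m) (hpos : ∀ n < Δ, kseq n * b n ≠ 0) :
    c (m + 1) * (hittingTimeOfDist k Δ b kseq (m + 1) - hittingTimeOfDist k Δ b kseq m) =
      k + b (m + 1) *
        (hittingTimeOfDist k Δ b kseq (m + 2) - hittingTimeOfDist k Δ b kseq (m + 1)) := by
  have hk : (kseq (m + 1) : ℝ) ≠ 0 := by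
    have := hkseq ▸ mul_comm (kseq m) (b m) ▸ hpos m (by omega)
    exact_mod_cast right_ne_zero_of_mul this
  have hcast : (c (m + 1) * kseq (m + 1) : ℝ) = kseq m * b m := by
    rw [mul_comm (kseq m : ℝ)]; exact_mod_cast hkseq
  have hlow := mul_hittingTimeOfDist_succ_sub (k := k) m fun h ↦ hpos m h
  have hhigh := mul_hittingTimeOfDist_succ_sub (k := k) (m + 1) fun h ↦ hpos (m + 1) h
  have hS : ∑ l ∈ Icc (m + 1) Δ, (kseq l : ℝ) =
      kseq (m + 1) + ∑ l ∈ Icc (m + 1 + 1) Δ, (kseq l : ℝ) := by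
    rw [← insert_Icc_add_one_left_eq_Icc hm, sum_insert (by simp)]
  apply mul_left_cancel₀ hk
  linear_combination (hittingTimeOfDist k Δ b kseq (m + 1) - hittingTimeOfDist k Δ b kseq m)
    * hcast + hlow - hhigh + k * hS

end hittingTimeOfDist

namespace SimpleGraph

variable {V : Type*} {G : SimpleGraph V}

lemma Reachable.exists_adj_dist_add_one {u v : V} (hr : G.Reachable u v) (hne : u ≠ v) :
    ∃ w, G.Adj u w ∧ G.dist v w + 1 = G.dist v u := by
  obtain ⟨p, hp⟩ := hr.exists_walk_length_eq_dist
  cases p with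
  | nil => exact absurd rfl hne
  | @cons _ w _ hadj q =>
    refine ⟨w, hadj, ?_⟩
    have hq : G.dist v w ≤ q.length := dist_comm (G := G) ▸ dist_le q
    have hvu : G.dist v u = q.length + 1 := by rw [dist_comm, ← hp, Walk.length_cons]
    rcases hadj.diff_dist_adj (u := v) with h | h | h <;> omega

lemma exists_dist_eq_of_le {u v : V} {n : ℕ} (hn : n ≤ G.dist v u) : ∃ w, G.dist v w = n := by
  obtain ⟨m, hm⟩ := Nat.exists_eq_add_of_le hn
  induction m generalizing u with
  | zero => exact ⟨u, hm⟩
  | succ m ih =>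
    have hpos : G.dist v u ≠ 0 := by omega
    have hne : u ≠ v := by rintro rfl; simp at hpos
    obtain ⟨w, -, hw⟩ := (Reachable.of_dist_ne_zero hpos).symm.exists_adj_dist_add_one hne
    exact ih (u := w) (by omega) (by omega)

section Finite

variable [Fintype V] [DecidableRel G.Adj]

lemma eq_of_adj_of_eq_average_of_le {g : V → ℝ} {M : ℝ} {u w : V} (hle : ∀ x, g x ≤ M)
    (havg : g u = (∑ x ∈ G.neighborFinset u, g x) / G.degree u) (hu : g u = M)
    (hadj : G.Adj u w) : g w = M := by
  have hdeg : (G.degree u : ℝ) ≠ 0 := by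
    exact_mod_cast ((G.degree_pos_iff_exists_adj u).2 ⟨w, hadj⟩).ne'
  have hsum : ∑ x ∈ G.neighborFinset u, g x = ∑ _x ∈ G.neighborFinset u, M := by
    rw [sum_const, card_neighborFinset_eq_degree, nsmul_eq_mul]
    rw [hu, eq_div_iff hdeg] at havg
    linarith
  exact (sum_eq_sum_iff_of_le fun x _ ↦ hle x).1 hsum w ((G.mem_neighborFinset u w).2 hadj)

/-- Maximum principle: a maximum of `g` propagates along a path towards `v`. -/
lemma Connected.le_zero_of_eq_average {v : V} {g : V → ℝ} (hconn : G.Connected) (hv : g v = 0)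
    (havg : ∀ u, u ≠ v → g u = (∑ w ∈ G.neighborFinset u, g w) / G.degree u) (u : V) :
    g u ≤ 0 := by
  obtain ⟨u₀, -, hmax⟩ := exists_max_image univ g ⟨v, mem_univ v⟩
  have hle : ∀ x, g x ≤ g u₀ := fun x ↦ hmax x (mem_univ x)
  suffices h : ∀ n x, G.dist v x = n → g x = g u₀ → g u₀ ≤ 0 from
    (hle u).trans (h _ u₀ rfl rfl)
  intro n
  induction n with
  | zero =>
    intro x hx hgx
    rw [← hgx, ← hconn.dist_eq_zero_iff.mp hx, hv]
  | succ n ih =>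
    intro x hx hgx
    have hne : x ≠ v := by rintro rfl; simp at hx
    obtain ⟨w, hadj, hw⟩ := (hconn x v).exists_adj_dist_add_one hne
    exact ih w (by omega) (eq_of_adj_of_eq_average_of_le hle (havg x hne) hgx hadj)

lemma Connected.eq_of_hittingTime_rec {v : V} {H₁ H₂ : V → ℝ} (hconn : G.Connected)
    (h₁v : H₁ v = 0) (h₂v : H₂ v = 0)
    (h₁ : ∀ u, u ≠ v → H₁ u = 1 + (∑ w ∈ G.neighborFinset u, H₁ w) / G.degree u)
    (h₂ : ∀ u, u ≠ v → H₂ u = 1 + (∑ w ∈ G.neighborFinset u, H₂ w) / G.degree u) :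
    H₁ = H₂ := by
  have hle : ∀ A B : V → ℝ, A v = 0 → B v = 0 →
      (∀ u, u ≠ v → A u = 1 + (∑ w ∈ G.neighborFinset u, A w) / G.degree u) →
      (∀ u, u ≠ v → B u = 1 + (∑ w ∈ G.neighborFinset u, B w) / G.degree u) →
      ∀ u, A u ≤ B u := by
    intro A B hAv hBv hA hB u
    have hdiff := hconn.le_zero_of_eq_average (v := v) (g := A - B) (by simp [hAv, hBv])
      (fun x hx ↦ by
        simp only [Pi.sub_apply, sum_sub_distrib, sub_div]
        rw [hA x hx, hB x hx]
        ring) u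
    simpa only [Pi.sub_apply, sub_nonpos] using hdiff
  funext u
  exact le_antisymm (hle H₁ H₂ h₁v h₂v h₁ h₂ u) (hle H₂ H₁ h₂v h₁v h₂ h₁ u)

def IsDistanceRegularWith (G : SimpleGraph V) [DecidableRel G.Adj] (b c : ℕ → ℕ) : Prop :=
  ∀ (u v : V) (i : ℕ), G.dist v u = i →
    ((G.neighborFinset u).filter (fun w => G.dist v w = i - 1)).card = c i ∧
    ((G.neighborFinset u).filter (fun w => G.dist v w = i + 1)).card = b i

namespace IsDistanceRegularWith

variable {b c : ℕ → ℕ}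

lemma b_ne_zero (hG : G.IsDistanceRegularWith b c) {u₀ v₀ : V} {n : ℕ}
    (hn : n < G.dist u₀ v₀) : b n ≠ 0 := by
  obtain ⟨w, hw⟩ := exists_dist_eq_of_le (G := G) (n := n + 1) hn
  have hne : w ≠ u₀ := by rintro rfl; simp at hw
  obtain ⟨x, hadj, hx⟩ :=
    (Reachable.of_dist_ne_zero (by omega : G.dist u₀ w ≠ 0)).symm.exists_adj_dist_add_one hne
  rw [← (hG x u₀ n (by omega)).2, ← pos_iff_ne_zero, card_pos]
  exact ⟨w, mem_filter.2 ⟨(G.mem_neighborFinset x w).2 hadj.symm, hw⟩⟩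

/-- For `i = 0` the `c i` term vanishes since `i - 1 = 0` in `ℕ`. -/
lemma sum_neighborFinset_comp_dist (hG : G.IsDistanceRegularWith b c) {k : ℕ}
    (hreg : G.IsRegularOfDegree k) (f : ℕ → ℝ) {u v : V} {i : ℕ} (hi : G.dist v u = i) :
    ∑ w ∈ G.neighborFinset u, f (G.dist v w) =
      k * f i + c i * (f (i - 1) - f i) + b i * (f (i + 1) - f i) := by
  have hsplit : ∀ w ∈ G.neighborFinset u, f (G.dist v w) = f i
      + (if G.dist v w = i - 1 then f (i - 1) - f i else 0)
      + (if G.dist v w = i + 1 then f (i + 1) - f i else 0) := by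
    intro w hw
    rcases ((G.mem_neighborFinset u w).1 hw).diff_dist_adj (u := v) with h | h | h <;> grind
  rw [sum_congr rfl hsplit, sum_add_distrib, sum_add_distrib, ← sum_filter, ← sum_filter,
    sum_const, sum_const, sum_const, card_neighborFinset_eq_degree, hreg u,
    (hG u v i hi).1, (hG u v i hi).2]
  simp only [nsmul_eq_mul]

lemma hittingTimeOfDist_rec {k Δ : ℕ} {kseq : ℕ → ℕ}
    (hG : G.IsDistanceRegularWith b c) (hreg : G.IsRegularOfDegree k)
    (hΔub : ∀ u v : V, G.dist u v ≤ Δ)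
    (hkseq : ∀ i : ℕ, 1 ≤ i → i ≤ Δ → c i * kseq i = b (i - 1) * kseq (i - 1))
    (hpos : ∀ n < Δ, kseq n * b n ≠ 0) {u v : V} (hr : G.Reachable u v) (hne : u ≠ v) :
    hittingTimeOfDist k Δ b kseq (G.dist v u) = 1 +
      (∑ w ∈ G.neighborFinset u, hittingTimeOfDist k Δ b kseq (G.dist v w)) / G.degree u := by
  obtain ⟨m, hm⟩ : ∃ m, G.dist v u = m + 1 :=
    Nat.exists_eq_add_one.2 (hr.symm.pos_dist_of_ne hne.symm)
  obtain ⟨w, hadj, -⟩ := hr.exists_adj_dist_add_one hne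
  have hk : (k : ℝ) ≠ 0 := by
    rw [← hreg u]; exact_mod_cast ((G.degree_pos_iff_exists_adj u).2 ⟨w, hadj⟩).ne'
  have hmΔ : m + 1 ≤ Δ := hm ▸ hΔub v u
  have hstep := hittingTimeOfDist_three_term (k := k) m hmΔ (hkseq (m + 1) (by omega) hmΔ) hpos
  rw [hG.sum_neighborFinset_comp_dist hreg _ hm, hreg u, hm, Nat.add_sub_cancel]
  field_simp
  linear_combination hstep

end IsDistanceRegularWith

end Finite

end SimpleGraph

theorem distanceRegular_hitting_time_general {V : Type*} [Fintype V]
    (G : SimpleGraph V) [DecidableRel G.Adj] (hconn : G.Connected)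
    (k Δ : ℕ) (hreg : G.IsRegularOfDegree k)
    (hΔub : ∀ u v : V, G.dist u v ≤ Δ) (hΔex : ∃ u v : V, G.dist u v = Δ)
    (b c : ℕ → ℕ)
    (hDRG : ∀ (u v : V) (i : ℕ), G.dist v u = i →
      ((G.neighborFinset u).filter (fun w => G.dist v w = i - 1)).card = c i ∧
      ((G.neighborFinset u).filter (fun w => G.dist v w = i + 1)).card = b i)
    (kseq : ℕ → ℕ) (hkseq0 : kseq 0 = 1)
    (hkseq : ∀ i : ℕ, 1 ≤ i → i ≤ Δ → c i * kseq i = b (i - 1) * kseq (i - 1))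
    (H : V → V → ℝ) (hH0 : ∀ v : V, H v v = 0)
    (hHrec : ∀ v u : V, u ≠ v →
      H v u = 1 + (∑ w ∈ G.neighborFinset u, H v w) / (G.degree u : ℝ)) :
    ∀ u v : V, H v u = ∑ j ∈ Finset.Icc 1 (G.dist u v),
      ((k : ℝ) / ((kseq (j - 1) : ℝ) * (b (j - 1) : ℝ))) *
        ∑ l ∈ Finset.Icc j Δ, (kseq l : ℝ) := by
  obtain ⟨u₀, v₀, hΔ⟩ := hΔex
  have hG : G.IsDistanceRegularWith b c := hDRG
  have hpos := kseq_mul_b_ne_zero hkseq0 hkseq fun n hn ↦ hG.b_ne_zero (hΔ ▸ hn)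
  intro u v
  have hH : H v = fun w ↦ hittingTimeOfDist k Δ b kseq (G.dist v w) :=
    hconn.eq_of_hittingTime_rec (hH0 v) (by simp) (hHrec v)
      fun u hu ↦ hG.hittingTimeOfDist_rec hreg hΔub hkseq hpos (hconn u v) hu
  rw [hH, SimpleGraph.dist_comm]
  rfl

/-- Let `G` be a connected distance-regular graph with valency `k`,
diameter `Δ` and intersection array `{b 0 = k, ..., b (Δ−1); c 1 = 1, ..., c Δ}`.
With `kseq 0 = 1` and `kseq i = (b (i−1) / c i) · kseq (i−1)` (expressed as
`c i · kseq i = b (i−1) · kseq (i−1)`), the average hitting time `H v u` from `u`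
to `v` (characterized by `H v v = 0` and the one-step recurrence) satisfies
`H v u = ∑_{j=1}^{dist u v} (k / (kseq (j−1) · b (j−1))) · ∑_{l=j}^{Δ} kseq l`. -/
theorem distanceRegular_hitting_time {V : Type*} [Fintype V] [DecidableEq V]
    (G : SimpleGraph V) [DecidableRel G.Adj] (hconn : G.Connected)
    (k Δ : ℕ) (hreg : G.IsRegularOfDegree k)
    (hΔub : ∀ u v : V, G.dist u v ≤ Δ) (hΔex : ∃ u v : V, G.dist u v = Δ)
    (b c : ℕ → ℕ) (hb0 : b 0 = k) (hc1 : c 1 = 1)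
    (hDRG : ∀ (u v : V) (i : ℕ), G.dist v u = i →
      ((G.neighborFinset u).filter (fun w => G.dist v w = i - 1)).card = c i ∧
      ((G.neighborFinset u).filter (fun w => G.dist v w = i + 1)).card = b i)
    (kseq : ℕ → ℕ) (hkseq0 : kseq 0 = 1)
    (hkseq : ∀ i : ℕ, 1 ≤ i → i ≤ Δ → c i * kseq i = b (i - 1) * kseq (i - 1))
    (H : V → V → ℝ) (hH0 : ∀ v : V, H v v = 0)
    (hHrec : ∀ v u : V, u ≠ v →
      H v u = 1 + (∑ w ∈ G.neighborFinset u, H v w) / (G.degree u : ℝ)) :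
    ∀ u v : V, H v u = ∑ j ∈ Finset.Icc 1 (G.dist u v),
      ((k : ℝ) / ((kseq (j - 1) : ℝ) * (b (j - 1) : ℝ))) *
        ∑ l ∈ Finset.Icc j Δ, (kseq l : ℝ) :=
  distanceRegular_hitting_time_general G hconn k Δ hreg hΔub hΔex b c hDRG kseq hkseq0 hkseq H hH0
    hHrec
end

section
/- Let G be a strongly regular graph with parameters (n, k, a, c) (connected, diameter 2). In the Cartesian product G □ G, the average hitting time between two distinct vertices (u_1, v_1) and (u_2, v_2) at distance 1 equals n² − 1. -/
/-!
Summing the hitting-time recurrence over all starting points shows that in a `d`-regular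
graph on `N` vertices, `d > 0`, the hitting times `H(x, ·)` of the neighbours of `x` average
to `N - 1` (Kac's formula: the walk returns to `x` after `N` steps on average). So it suffices
to see that `H(x, ·)` takes one value on all neighbours of `x` in `G □ G`.

Classify `z ∈ V × V` by the unordered pair of relations (equal, adjacent, non-adjacent) of its
coordinates to those of `x`. Strong regularity makes this partition equitable for `G □ G`, and
averaging a hitting-time function over the cells of an equitable partition in which `x` is
alone in its cell yields again a hitting-time function; by the maximum principle it is the
original one. Every neighbour of `x` lies in the cell `{equal, adjacent}`.
-/

open Finset

namespace SimpleGraph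

section
variable {W : Type*} {Γ : SimpleGraph W} [∀ v, Fintype (Γ.neighborSet v)]

def IsHittingTime (Γ : SimpleGraph W) [∀ v, Fintype (Γ.neighborSet v)] (x : W) (h : W → ℝ) :
    Prop :=
  h x = 0 ∧ ∀ y ≠ x, h y = 1 + (∑ w ∈ Γ.neighborFinset y, h w) / Γ.degree y

variable {C : Type*} {π : W → C}

def IsEquitable (Γ : SimpleGraph W) [∀ v, Fintype (Γ.neighborSet v)] (π : W → C) : Prop :=
  ∀ u v, π u = π v → (Γ.neighborFinset u).val.map π = (Γ.neighborFinset v).val.map π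

theorem IsEquitable.sum_neighborFinset_comp_eq (hπ : Γ.IsEquitable π) {u v : W}
    (huv : π u = π v) {β : Type*} [AddCommMonoid β] (g : C → β) :
    ∑ w ∈ Γ.neighborFinset u, g (π w) = ∑ w ∈ Γ.neighborFinset v, g (π w) := by
  simpa only [sum_eq_multiset_sum, Multiset.map_map, Function.comp_def] using
    congrArg (fun s => (s.map g).sum) (hπ u v huv)

theorem IsEquitable.degree_eq (hπ : Γ.IsEquitable π) {u v : W} (huv : π u = π v) :
    Γ.degree u = Γ.degree v := by
  simpa only [← card_neighborFinset_eq_degree, card_eq_sum_ones] using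
    hπ.sum_neighborFinset_comp_eq huv fun _ => 1

theorem IsEquitable.card_filter_eq [DecidableEq C] (hπ : Γ.IsEquitable π) {u v : W}
    (huv : π u = π v) (c : C) :
    #{w ∈ Γ.neighborFinset u | π w = c} = #{w ∈ Γ.neighborFinset v | π w = c} := by
  simpa only [card_filter] using
    hπ.sum_neighborFinset_comp_eq huv fun c' => if c' = c then 1 else 0

end

section
variable {W : Type*} [Fintype W] {Γ : SimpleGraph W} [∀ v, Fintype (Γ.neighborSet v)]

theorem Connected.apply_le_of_harmonic_off (hΓ : Γ.Connected) {x : W} {f : W → ℝ}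
    (hf : ∀ y ≠ x, f y = (∑ w ∈ Γ.neighborFinset y, f w) / Γ.degree y) (y : W) :
    f y ≤ f x := by
  have : Nonempty W := ⟨x⟩
  obtain ⟨y₀, hy₀⟩ := Finite.exists_max f
  refine (hy₀ y).trans (not_lt.mp fun hlt => ?_)
  obtain ⟨d, -, hmax, hsnd⟩ :=
    (hΓ.preconnected y₀ x).some.exists_boundary_dart {z | f z = f y₀} rfl hlt.ne
  have hdeg : (0 : ℝ) < Γ.degree d.fst :=
    Nat.cast_pos.mpr ((Γ.degree_pos_iff_exists_adj _).mpr ⟨_, d.adj⟩)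
  have hlt_sum : ∑ w ∈ Γ.neighborFinset d.fst, f w < Γ.degree d.fst * f y₀ := by
    rw [← card_neighborFinset_eq_degree, ← nsmul_eq_mul, ← sum_const]
    exact sum_lt_sum (fun w _ => hy₀ w)
      ⟨d.snd, (mem_neighborFinset _ _ _).mpr d.adj, (hy₀ _).lt_of_ne hsnd⟩
  have hmean := hf d.fst fun h => hlt.ne (h ▸ hmax)
  rw [hmax, eq_div_iff hdeg.ne'] at hmean
  linarith

theorem Connected.isHittingTime_unique (hΓ : Γ.Connected) {x : W} {f g : W → ℝ}
    (hf : Γ.IsHittingTime x f) (hg : Γ.IsHittingTime x g) : f = g := by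
  have sub_nonpos : ∀ {f g : W → ℝ}, Γ.IsHittingTime x f → Γ.IsHittingTime x g →
      ∀ y, f y - g y ≤ 0 := by
    intro f g hf hg y
    have := hΓ.apply_le_of_harmonic_off (x := x) (f := f - g) (fun y hy => by
      simp only [Pi.sub_apply, hf.2 y hy, hg.2 y hy, sum_sub_distrib]; ring) y
    simpa [hf.1, hg.1] using this
  funext y
  linarith [sub_nonpos hf hg y, sub_nonpos hg hf y]

theorem sum_sum_neighborFinset [DecidableEq W] (A : Finset W) (f : W → ℝ) :
    ∑ u ∈ A, ∑ w ∈ Γ.neighborFinset u, f w = ∑ w, #{u ∈ Γ.neighborFinset w | u ∈ A} * f w := by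
  rw [sum_comm' (t' := univ) (s' := fun w => {u ∈ Γ.neighborFinset w | u ∈ A}) fun u w => by
    simp [mem_neighborFinset, Γ.adj_comm, and_comm]]
  simp only [sum_const, nsmul_eq_mul]

theorem IsHittingTime.sum_neighborFinset [DecidableEq W] {d : ℕ} (hreg : Γ.IsRegularOfDegree d)
    (hd : d ≠ 0) {x : W} {h : W → ℝ} (hh : Γ.IsHittingTime x h) :
    ∑ w ∈ Γ.neighborFinset x, h w = d * (Fintype.card W - 1) := by
  have : Nonempty W := ⟨x⟩
  have htotal : ∑ y, ∑ w ∈ Γ.neighborFinset y, h w = d * ∑ w, h w := by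
    rw [sum_sum_neighborFinset, mul_sum]
    refine sum_congr rfl fun w _ => ?_
    rw [filter_true_of_mem fun _ _ => mem_univ _, card_neighborFinset_eq_degree, hreg w]
  have hrec : ∑ y ∈ univ.erase x, h y
      = (Fintype.card W - 1) + (∑ y ∈ univ.erase x, ∑ w ∈ Γ.neighborFinset y, h w) / d := by
    rw [sum_congr rfl fun y hy => by rw [hh.2 y (ne_of_mem_erase hy), hreg y], sum_add_distrib,
      sum_const, card_erase_of_mem (mem_univ x), card_univ, ← sum_div, nsmul_one,
      Nat.cast_pred Fintype.card_pos]
  rw [sum_erase _ hh.1, sum_erase_eq_sub (mem_univ x), htotal] at hrec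
  field_simp [Nat.cast_ne_zero.mpr hd] at hrec
  linarith

variable {C : Type*} [DecidableEq C] {π : W → C}

noncomputable def cellAvg (π : W → C) (f : W → ℝ) (y : W) : ℝ :=
  (∑ u with π u = π y, f u) / #{u | π u = π y}

variable [DecidableEq W]

-- Both sides count the edges between the cells of `y` and of `v`.
theorem IsEquitable.card_mul_card_filter (hπ : Γ.IsEquitable π) (y v : W) :
    #{u | π u = π y} * #{w ∈ Γ.neighborFinset y | π w = π v}
      = #{u | π u = π v} * #{w ∈ Γ.neighborFinset v | π w = π y} := by
  have edges := sum_card_bipartiteAbove_eq_sum_card_bipartiteBelow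
    (s := {u | π u = π y}) (t := {w | π w = π v}) (r := fun u w => w ∈ Γ.neighborFinset u)
  have above : ∀ u ∈ ({u | π u = π y} : Finset W),
      #(bipartiteAbove (fun u w => w ∈ Γ.neighborFinset u) {w | π w = π v} u)
        = #{w ∈ Γ.neighborFinset y | π w = π v} := fun u hu => by
    rw [← hπ.card_filter_eq (mem_filter.mp hu).2]
    congr 1; ext w; simp [bipartiteAbove, and_comm]
  have below : ∀ w ∈ ({w | π w = π v} : Finset W),
      #(bipartiteBelow (fun u w => w ∈ Γ.neighborFinset u) {u | π u = π y} w)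
        = #{u ∈ Γ.neighborFinset v | π u = π y} := fun w hw => by
    rw [← hπ.card_filter_eq (mem_filter.mp hw).2]
    congr 1; ext u; simp [bipartiteBelow, mem_neighborFinset, Γ.adj_comm, and_comm]
  rwa [sum_congr rfl above, sum_congr rfl below, sum_const, sum_const, smul_eq_mul,
    smul_eq_mul] at edges

theorem IsEquitable.sum_neighborFinset_cellAvg (hπ : Γ.IsEquitable π) (f : W → ℝ) (y : W) :
    ∑ w ∈ Γ.neighborFinset y, cellAvg π f w
      = cellAvg π (fun u => ∑ w ∈ Γ.neighborFinset u, f w) y := by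
  have cell_pos : ∀ v, (0 : ℝ) < #{u | π u = π v} := fun v =>
    Nat.cast_pos.mpr (card_pos.mpr ⟨v, by simp⟩)
  have avg_eq : ∀ w, cellAvg π f w
      = ∑ u, if π w = π u then f u / #{u' | π u' = π u} else 0 := fun w => by
    rw [cellAvg, sum_filter, sum_div]
    refine sum_congr rfl fun u _ => ?_
    split_ifs <;> first | rfl | simp_all [eq_comm]
  calc ∑ w ∈ Γ.neighborFinset y, cellAvg π f w
      = ∑ u, #{w ∈ Γ.neighborFinset y | π w = π u} * (f u / #{u' | π u' = π u}) := by
        simp only [avg_eq]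
        rw [sum_comm]
        simp only [← sum_filter, sum_const, nsmul_eq_mul]
    _ = ∑ u, #{w ∈ Γ.neighborFinset u | π w = π y} * f u / #{u' | π u' = π y} := by
        refine sum_congr rfl fun u _ => ?_
        have edges : (#{u' | π u' = π y} : ℝ) * #{w ∈ Γ.neighborFinset y | π w = π u}
            = #{u' | π u' = π u} * #{w ∈ Γ.neighborFinset u | π w = π y} := by
          exact_mod_cast hπ.card_mul_card_filter y u
        field_simp [(cell_pos u).ne', (cell_pos y).ne']
        linear_combination f u * edges
    _ = cellAvg π (fun u => ∑ w ∈ Γ.neighborFinset u, f w) y := by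
        rw [cellAvg, sum_sum_neighborFinset, sum_div]
        simp only [mem_filter, mem_univ, true_and]

theorem IsEquitable.isHittingTime_cellAvg (hπ : Γ.IsEquitable π) {x : W}
    (hx : ∀ z, π z = π x → z = x) {h : W → ℝ} (hh : Γ.IsHittingTime x h) :
    Γ.IsHittingTime x (cellAvg π h) := by
  constructor
  · have cell_x : ({u | π u = π x} : Finset W) = {x} := by
      ext u; simpa using ⟨hx u, fun hu => hu ▸ rfl⟩
    rw [cellAvg, cell_x, sum_singleton, hh.1, zero_div]
  · intro y hy
    have cell_y : ∀ u ∈ ({u | π u = π y} : Finset W),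
        h u = 1 + (∑ w ∈ Γ.neighborFinset u, h w) / Γ.degree y := fun u hu => by
      have hu : π u = π y := (mem_filter.mp hu).2
      rw [hh.2 u fun hux => hy (hx y (hux ▸ hu.symm)), hπ.degree_eq hu]
    have cell_pos : (0 : ℝ) < #{u | π u = π y} := Nat.cast_pos.mpr (card_pos.mpr ⟨y, by simp⟩)
    rw [hπ.sum_neighborFinset_cellAvg, cellAvg, cellAvg, sum_congr rfl cell_y, sum_add_distrib,
      sum_const, ← sum_div, nsmul_one, add_div, div_self cell_pos.ne', div_div, div_div, mul_comm]

theorem IsHittingTime.apply_eq_of_isEquitable {x : W} {h : W → ℝ} (hh : Γ.IsHittingTime x h)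
    (hΓ : Γ.Connected) (hπ : Γ.IsEquitable π) (hx : ∀ z, π z = π x → z = x) {y z : W}
    (hyz : π y = π z) : h y = h z := by
  rw [hΓ.isHittingTime_unique hh (hπ.isHittingTime_cellAvg hx hh), cellAvg, cellAvg, hyz]

end

theorem isEquitable_boxProd_sym2 {V₁ V₂ C : Type*} {G₁ : SimpleGraph V₁} {G₂ : SimpleGraph V₂}
    [∀ v, Fintype (G₁.neighborSet v)] [∀ v, Fintype (G₂.neighborSet v)]
    {π₁ : V₁ → C} {π₂ : V₂ → C} {μ : C → Multiset C}
    (h₁ : ∀ u, (G₁.neighborFinset u).val.map π₁ = μ (π₁ u))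
    (h₂ : ∀ v, (G₂.neighborFinset v).val.map π₂ = μ (π₂ v)) :
    (G₁ □ G₂).IsEquitable fun z => s(π₁ z.1, π₂ z.2) := by
  set F : C → C → Multiset (Sym2 C) := fun i j => (μ i).map (s(·, j)) + (μ j).map (s(i, ·))
  have F_comm : ∀ i j, F i j = F j i := fun i j => by
    simp only [F, Sym2.eq_swap (a := i), Sym2.eq_swap (b := j)]
    exact add_comm _ _
  have nbr : ∀ z : V₁ × V₂, ((G₁ □ G₂).neighborFinset z).val.map (fun z => s(π₁ z.1, π₂ z.2))
      = F (π₁ z.1) (π₂ z.2) := fun z => by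
    rw [neighborFinset_boxProd, disjUnion_val, Multiset.map_add, product_singleton,
      singleton_product, map_val, map_val]
    simp only [F, ← h₁, ← h₂, Multiset.map_map]
    rfl
  intro z z' hzz'
  rw [nbr, nbr]
  rcases Sym2.eq_iff.mp hzz' with ⟨h1, h2⟩ | ⟨h1, h2⟩
  · rw [h1, h2]
  · rw [h1, h2, F_comm]

section
variable {V : Type*} [DecidableEq V] (G : SimpleGraph V) [DecidableRel G.Adj]

def adjClass (p u : V) : ℕ := if u = p then 0 else if G.Adj p u then 1 else 2

def srgNeighborProfile (k a c : ℕ) : ℕ → Multiset ℕ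
  | 0 => Multiset.replicate k 1
  | 1 => 0 ::ₘ (Multiset.replicate a 1 + Multiset.replicate (k - 1 - a) 2)
  | _ => Multiset.replicate c 1 + Multiset.replicate (k - c) 2

variable {G}

theorem adjClass_le_two (p u : V) : G.adjClass p u ≤ 2 := by
  unfold adjClass; split_ifs <;> omega

theorem adjClass_eq_zero {p w : V} : G.adjClass p w = 0 ↔ w = p := by
  unfold adjClass; split_ifs <;> simp_all

@[simp]
theorem adjClass_self (p : V) : G.adjClass p p = 0 := adjClass_eq_zero.mpr rfl

theorem adjClass_eq_one {p w : V} : G.adjClass p w = 1 ↔ G.Adj p w := by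
  unfold adjClass; split_ifs <;> simp_all

variable [Fintype V]

theorem count_map_adjClass (p u : V) (j : ℕ) :
    ((G.neighborFinset u).val.map (G.adjClass p)).count j
      = #{w ∈ G.neighborFinset u | G.adjClass p w = j} := by
  rw [Multiset.count_map, ← filter_val, card_val]
  simp only [eq_comm]

theorem count_map_adjClass_zero (p u : V) :
    ((G.neighborFinset u).val.map (G.adjClass p)).count 0 = if G.Adj u p then 1 else 0 := by
  rw [count_map_adjClass]
  simp only [adjClass_eq_zero, filter_eq', mem_neighborFinset]
  split_ifs <;> rfl

theorem count_map_adjClass_one (p u : V) :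
    ((G.neighborFinset u).val.map (G.adjClass p)).count 1
      = #(G.neighborFinset p ∩ G.neighborFinset u) := by
  rw [count_map_adjClass]
  congr 1; ext w; simp [adjClass_eq_one, and_comm]

theorem map_adjClass_neighborFinset {k a c : ℕ} (hreg : G.IsRegularOfDegree k)
    (ha : ∀ u v, G.Adj u v → #(G.neighborFinset u ∩ G.neighborFinset v) = a)
    (hc : ∀ u v, u ≠ v → ¬G.Adj u v → #(G.neighborFinset u ∩ G.neighborFinset v) = c)
    (p u : V) :
    (G.neighborFinset u).val.map (G.adjClass p) = srgNeighborProfile k a c (G.adjClass p u) := by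
  have count_zero := count_map_adjClass_zero (G := G) p u
  have count_one := count_map_adjClass_one (G := G) p u
  set m := (G.neighborFinset u).val.map (G.adjClass p)
  have count_total : m.count 0 + m.count 1 + m.count 2 = k := by
    have := Multiset.sum_count_eq_card (s := range 3) (m := m) fun j hj => by
      obtain ⟨w, -, rfl⟩ := Multiset.mem_map.mp hj
      exact mem_range.mpr (Nat.lt_succ_of_le (adjClass_le_two p w))
    simpa [sum_range_succ, m, hreg u] using this
  have count_large : ∀ j, 3 ≤ j → m.count j = 0 := fun j hj => by
    refine Multiset.count_eq_zero.mpr fun hm => ?_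
    obtain ⟨w, -, rfl⟩ := Multiset.mem_map.mp hm
    exact absurd (adjClass_le_two (G := G) p w) (by omega)
  have counts : (G.adjClass p u = 0 ∧ m.count 0 = 0 ∧ m.count 1 = k) ∨
      (G.adjClass p u = 1 ∧ m.count 0 = 1 ∧ m.count 1 = a) ∨
      (G.adjClass p u = 2 ∧ m.count 0 = 0 ∧ m.count 1 = c) := by
    rcases eq_or_ne u p with rfl | hup
    · simp [count_zero, count_one, hreg u]
    by_cases hadj : G.Adj p u
    · simp [adjClass, hup, hadj, hadj.symm, count_zero, count_one, ha p u hadj]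
    · simp [adjClass, hup, hadj, G.adj_comm, count_zero, count_one, hc p u hup.symm hadj]
  clear_value m
  refine Multiset.ext.mpr fun j => ?_
  rcases le_or_gt j 2 with hj | hj
  · interval_cases j <;>
    rcases counts with ⟨hcls, h0, h1⟩ | ⟨hcls, h0, h1⟩ | ⟨hcls, h0, h1⟩ <;>
    simp [hcls, srgNeighborProfile, Multiset.count_replicate] <;>
    first | omega | exact Multiset.count_eq_zero.mp (by omega)
  · have : j ≠ 0 ∧ 1 ≠ j ∧ 2 ≠ j := by omega
    rw [count_large j hj]
    rcases counts with ⟨hcls, -⟩ | ⟨hcls, -⟩ | ⟨hcls, -⟩ <;>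
    simp [hcls, srgNeighborProfile, Multiset.count_replicate, this]

end

end SimpleGraph

theorem srg_boxProd_adjacent_hitting_time_general {V : Type*} [Fintype V] [DecidableEq V]
    (G : SimpleGraph V) [DecidableRel G.Adj]
    (n k a c : ℕ) (hn : Fintype.card V = n) (hreg : G.IsRegularOfDegree k)
    (hconn : G.Connected)
    (ha : ∀ u v : V, G.Adj u v →
      (G.neighborFinset u ∩ G.neighborFinset v).card = a)
    (hc : ∀ u v : V, u ≠ v → ¬G.Adj u v →
      (G.neighborFinset u ∩ G.neighborFinset v).card = c)
    (H : V × V → V × V → ℝ) (hH0 : ∀ x : V × V, H x x = 0)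
    (hHrec : ∀ x y : V × V, y ≠ x →
      H x y = 1 + (∑ w ∈ (G □ G).neighborFinset y, H x w) / ((G □ G).degree y : ℝ)) :
    ∀ x y : V × V, (G □ G).Adj x y → H x y = (n : ℝ) ^ 2 - 1 := by
  intro x y hxy
  set π : V × V → Sym2 ℕ := fun z => s(G.adjClass x.1 z.1, G.adjClass x.2 z.2)
  have hπ : (G □ G).IsEquitable π := SimpleGraph.isEquitable_boxProd_sym2
    (SimpleGraph.map_adjClass_neighborFinset hreg ha hc x.1)
    (SimpleGraph.map_adjClass_neighborFinset hreg ha hc x.2)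
  have hπx : ∀ z, π z = π x → z = x := fun z hz => by
    simpa [π, Sym2.eq_iff, SimpleGraph.adjClass_eq_zero, Prod.ext_iff] using hz
  have hπ_adj : ∀ w, (G □ G).Adj x w → π w = s(0, 1) := by
    rintro w (⟨h, h'⟩ | ⟨h, h'⟩) <;>
      simp [π, ← h', SimpleGraph.adjClass_eq_one.mpr h, Sym2.eq_swap]
  have hreg₂ : (G □ G).IsRegularOfDegree (k + k) := fun z => by
    rw [SimpleGraph.degree_boxProd, hreg, hreg]
  have hk : k + k ≠ 0 := (hreg₂ x ▸ ((G □ G).degree_pos_iff_exists_adj x).mpr ⟨y, hxy⟩).ne'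
  have hh : (G □ G).IsHittingTime x (H x) := ⟨hH0 x, hHrec x⟩
  have hsum := hh.sum_neighborFinset hreg₂ hk
  rw [sum_congr rfl fun w hw => hh.apply_eq_of_isEquitable (hconn.boxProd hconn) hπ hπx
      ((hπ_adj w (((G □ G).mem_neighborFinset x w).mp hw)).trans (hπ_adj y hxy).symm),
    sum_const, (G □ G).card_neighborFinset_eq_degree, hreg₂, Fintype.card_prod, hn,
    nsmul_eq_mul] at hsum
  rw [mul_left_cancel₀ (by exact_mod_cast hk) hsum]
  push_cast
  ring

/-- Let `G` be a (connected, diameter-2) strongly regular graph with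
parameters `(n, k, a, c)`.  In the Cartesian product `G □ G`, the average hitting
time `H` (characterized by `H x x = 0` and the one-step recurrence) between two
adjacent vertices equals `n² − 1`. -/
theorem srg_boxProd_adjacent_hitting_time {V : Type*} [Fintype V] [DecidableEq V]
    (G : SimpleGraph V) [DecidableRel G.Adj]
    (n k a c : ℕ) (hn : Fintype.card V = n) (hreg : G.IsRegularOfDegree k)
    (hconn : G.Connected) (hdiam : ∀ u v : V, G.dist u v ≤ 2)
    (ha : ∀ u v : V, G.Adj u v →
      (G.neighborFinset u ∩ G.neighborFinset v).card = a)
    (hc : ∀ u v : V, u ≠ v → ¬G.Adj u v →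
      (G.neighborFinset u ∩ G.neighborFinset v).card = c)
    (H : V × V → V × V → ℝ) (hH0 : ∀ x : V × V, H x x = 0)
    (hHrec : ∀ x y : V × V, y ≠ x →
      H x y = 1 + (∑ w ∈ (G □ G).neighborFinset y, H x w) / ((G □ G).degree y : ℝ)) :
    ∀ x y : V × V, (G □ G).Adj x y → H x y = (n : ℝ) ^ 2 - 1 :=
  srg_boxProd_adjacent_hitting_time_general G n k a c hn hreg hconn ha hc H hH0 hHrec
end
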